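/- arXiv:1401.7182 — 10 statements merged into one kernel-verified Lean document; each statement's English description precedes it below -/
import Mathlib

section
/- Let α > 0 and let f : (0,∞) → [0,∞) be a function such that (i) f is bounded on [ε,∞) for every ε > 0, and (ii) r^α f(r) → 0 as r → 0⁺. Then for every r > 0 there exists s > 0 such that f(s) ≥ f(r) and f(t) ≤ 2^α f(s) for every t ∈ [s/2, 2s]. -/
open Set Filter

/-- If `f : (0,∞) → [0,∞)` is bounded on `[ε,∞)` for every `ε > 0` and
`r^α f(r) → 0` as `r → 0⁺`, then for every `r > 0` there is `s > 0` with `f(s) ≥ f(r)`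
and `f(t) ≤ 2^α f(s)` for all `t ∈ [s/2, 2s]`. -/
theorem statement3 (α : ℝ) (hα : 0 < α) (f : ℝ → ℝ)
    (hfnonneg : ∀ r : ℝ, 0 < r → 0 ≤ f r)
    (hbdd : ∀ ε : ℝ, 0 < ε → ∃ M : ℝ, ∀ r : ℝ, ε ≤ r → f r ≤ M)
    (hlim : Tendsto (fun r : ℝ => r ^ α * f r) (nhdsWithin 0 (Ioi 0)) (nhds 0)) :
    ∀ r : ℝ, 0 < r → ∃ s : ℝ, 0 < s ∧ f r ≤ f s ∧
      ∀ t ∈ Icc (s / 2) (2 * s), f t ≤ 2 ^ α * f s := by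
  intro r hr
  by_contra hcon
  push_neg at hcon
  have h2α : (1:ℝ) < 2 ^ α := by
    rw [show (1:ℝ) = (2:ℝ) ^ (0:ℝ) by simp]
    exact (Real.rpow_lt_rpow_left_iff (by norm_num)).2 hα
  -- build the iterated sequence
  have step : ∀ x : {s : ℝ // 0 < s ∧ f r ≤ f s},
      ∃ y : {s : ℝ // 0 < s ∧ f r ≤ f s},
        (x:ℝ)/2 ≤ (y:ℝ) ∧ 2 ^ α * f x < f y := by
    rintro ⟨s, hs, hfs⟩
    obtain ⟨t, ht, hft⟩ := hcon s hs hfs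
    have ht0 : 0 < t := lt_of_lt_of_le (by linarith) ht.1
    have hfrt : f r ≤ f t := by
      have h1 : f s ≤ 2 ^ α * f s :=
        le_mul_of_one_le_left (hfnonneg s hs) h2α.le
      linarith
    exact ⟨⟨t, ht0, hfrt⟩, ht.1, hft⟩
  choose G hG1 hG2 using step
  set u : ℕ → {s : ℝ // 0 < s ∧ f r ≤ f s} :=
    fun n => G^[n] ⟨r, hr, le_refl _⟩ with hu
  have husucc : ∀ n, u (n+1) = G (u n) := by
    intro n
    simp only [hu, Function.iterate_succ_apply']
  set c := f (u 1) with hc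
  have hc0 : 0 < c := by
    have h1 := hG2 (u 0)
    rw [← husucc 0] at h1
    have h0 : 0 ≤ f (u 0) := hfnonneg _ (u 0).2.1
    nlinarith
  have growth : ∀ n : ℕ, (2 ^ α) ^ n * c ≤ f (u (n+1)) := by
    intro n
    induction n with
    | zero => simp [hc]
    | succ n ih =>
      have h1 := hG2 (u (n+1))
      rw [← husucc (n+1)] at h1
      have hp : (0:ℝ) < 2 ^ α := by linarith
      calc (2 ^ α) ^ (n+1) * c = 2 ^ α * ((2 ^ α) ^ n * c) := by ring
        _ ≤ 2 ^ α * f (u (n+1)) := by nlinarith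
        _ ≤ f (u (n+1+1)) := h1.le
  have lower : ∀ n : ℕ, (u 1 : ℝ) / 2 ^ n ≤ (u (n+1) : ℝ) := by
    intro n
    induction n with
    | zero => simp
    | succ n ih =>
      have h1 := hG1 (u (n+1))
      rw [← husucc (n+1)] at h1
      have h2 : (u 1 : ℝ) / 2 ^ (n+1) ≤ (u (n+1) : ℝ) / 2 := by
        rw [pow_succ]
        have := (u 1).2.1
        rw [div_le_div_iff₀ (by positivity) (by norm_num)]
        rw [div_le_iff₀ (by positivity)] at ih
        nlinarith
      linarith
  set E := (u 1 : ℝ) ^ α * c with hE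
  have hE0 : 0 < E := by
    have := (u 1).2.1
    positivity
  have hbig : ∀ n : ℕ, E ≤ (u (n+1) : ℝ) ^ α * f (u (n+1)) := by
    intro n
    have hu1 := (u 1).2.1
    have h1 : ((u 1 : ℝ) / 2 ^ n) ^ α ≤ (u (n+1) : ℝ) ^ α :=
      Real.rpow_le_rpow (by positivity) (lower n) hα.le
    have h2 : ((u 1 : ℝ) / 2 ^ n) ^ α * ((2 ^ α) ^ n * c) = E := by
      rw [Real.div_rpow hu1.le (by positivity)]
      rw [← Real.rpow_natCast (2:ℝ) n, ← Real.rpow_natCast ((2:ℝ)^α) n,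
        ← Real.rpow_mul (by norm_num), ← Real.rpow_mul (by norm_num),
        mul_comm (n:ℝ) α]
      have hpos : (0:ℝ) < (2:ℝ) ^ (α * (n:ℝ)) := Real.rpow_pos_of_pos (by norm_num) _
      field_simp [hE]
      ring
    have h3 : (0:ℝ) ≤ (2 ^ α) ^ n * c := by positivity
    have h4 : (0:ℝ) ≤ (u (n+1) : ℝ) ^ α := Real.rpow_nonneg (u (n+1)).2.1.le _
    calc E = ((u 1 : ℝ) / 2 ^ n) ^ α * ((2 ^ α) ^ n * c) := h2.symm
      _ ≤ (u (n+1) : ℝ) ^ α * ((2 ^ α) ^ n * c) := by nlinarith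
      _ ≤ (u (n+1) : ℝ) ^ α * f (u (n+1)) := by nlinarith [growth n]
  rw [Metric.tendsto_nhdsWithin_nhds] at hlim
  obtain ⟨δ, hδ0, hδ⟩ := hlim E hE0
  have hδle : ∀ n : ℕ, δ ≤ (u (n+1) : ℝ) := by
    intro n
    by_contra hlt
    push_neg at hlt
    have hx := (u (n+1)).2.1
    have hd : dist ((u (n+1) : ℝ)) 0 < δ := by
      rw [Real.dist_eq, sub_zero, abs_of_pos hx]; exact hlt
    have hlt2 := hδ hx hd
    rw [Real.dist_eq, sub_zero] at hlt2
    have hb := hbig n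
    have habs := le_abs_self ((u (n+1) : ℝ) ^ α * f (u (n+1)))
    linarith
  obtain ⟨M, hM⟩ := hbdd δ hδ0
  obtain ⟨n, hn⟩ := pow_unbounded_of_one_lt (M / c) h2α
  have h5 : f (u (n+1)) ≤ M := hM _ (hδle n)
  have h6 := growth n
  rw [div_lt_iff₀ hc0] at hn
  linarith
end

section
/- Let Ω ⊂ ℝ^N be a bounded open set, let U ⊂ ℝ^N be an open set containing the closure of Ω, and let u ∈ C¹(U) be such that ∇u(x) ≠ 0 for every x in the closure of Ω with u(x) = 0. Then there exists a constant κ > 0 such that λ({x ∈ Ω : |u(x)| ≤ δ}) ≤ κδ for every δ > 0. -/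
/-!
Near a point `z` where `u` has a nonzero derivative `⟪g, ·⟫`, the map
`Φ x = x + (u x / ‖g‖ - ⟪e, x⟫) • e`, with `e = g / ‖g‖`, has derivative the identity at `z`, so on
a small neighbourhood of `z` it at most halves volumes. It satisfies `⟪e, Φ x⟫ = u x / ‖g‖`, hence
maps `{|u| ≤ δ}` into a slab of width `2δ / ‖g‖` inside a fixed ball, and such slabs have volume
`O(δ)`. Near a point where `u ≠ 0` the set `{|u| ≤ δ}` is empty for small `δ`. Compactness of the
closure of `Ω` glues these local bounds together.
-/

open MeasureTheory Set Metric Bornology Filter Topology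
open scoped ENNReal NNReal InnerProductSpace

def HasLinearSublevelMeasure {α : Type*} [MeasurableSpace α] (μ : Measure α) (u : α → ℝ)
    (s : Set α) : Prop :=
  ∃ C : ℝ≥0∞, C ≠ ∞ ∧ ∀ δ : ℝ, 0 < δ → μ {x ∈ s | |u x| ≤ δ} ≤ C * ENNReal.ofReal δ

namespace HasLinearSublevelMeasure

variable {α : Type*} [MeasurableSpace α] {μ : Measure α} {u : α → ℝ} {s t : Set α}

theorem mono (ht : HasLinearSublevelMeasure μ u t) (hst : s ⊆ t) :
    HasLinearSublevelMeasure μ u s :=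
  let ⟨C, hC, hCδ⟩ := ht
  ⟨C, hC, fun δ hδ => (measure_mono (inter_subset_inter_left _ hst)).trans (hCδ δ hδ)⟩

theorem union (hs : HasLinearSublevelMeasure μ u s) (ht : HasLinearSublevelMeasure μ u t) :
    HasLinearSublevelMeasure μ u (s ∪ t) := by
  obtain ⟨C₁, hC₁, hC₁δ⟩ := hs
  obtain ⟨C₂, hC₂, hC₂δ⟩ := ht
  refine ⟨C₁ + C₂, ENNReal.add_ne_top.2 ⟨hC₁, hC₂⟩, fun δ hδ => ?_⟩
  calc μ {x ∈ s ∪ t | |u x| ≤ δ}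
      = μ ({x ∈ s | |u x| ≤ δ} ∪ {x ∈ t | |u x| ≤ δ}) := congrArg μ sep_union
    _ ≤ μ {x ∈ s | |u x| ≤ δ} + μ {x ∈ t | |u x| ≤ δ} := measure_union_le _ _
    _ ≤ C₁ * ENNReal.ofReal δ + C₂ * ENNReal.ofReal δ := add_le_add (hC₁δ δ hδ) (hC₂δ δ hδ)
    _ = (C₁ + C₂) * ENNReal.ofReal δ := (add_mul _ _ _).symm

theorem of_le_abs (hμs : μ s ≠ ∞) {ε : ℝ} (hε : 0 < ε) (hu : ∀ x ∈ s, ε ≤ |u x|) :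
    HasLinearSublevelMeasure μ u s := by
  refine ⟨μ s / ENNReal.ofReal ε, ENNReal.div_ne_top hμs (by simpa using hε), fun δ hδ => ?_⟩
  rcases lt_or_ge δ ε with hδε | hεδ
  · have hempty : {x ∈ s | |u x| ≤ δ} = ∅ :=
      eq_empty_of_forall_notMem fun x hx => (hδε.trans_le (hu x hx.1)).not_ge hx.2
    simp [hempty]
  · calc μ {x ∈ s | |u x| ≤ δ}
        ≤ μ s := measure_mono (sep_subset _ _)
      _ = μ s / ENNReal.ofReal ε * ENNReal.ofReal ε :=
        (ENNReal.div_mul_cancel (by simpa using hε) ENNReal.ofReal_ne_top).symm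
      _ ≤ μ s / ENNReal.ofReal ε * ENNReal.ofReal δ := by gcongr

end HasLinearSublevelMeasure

theorem IsCompact.hasLinearSublevelMeasure {X : Type*} [TopologicalSpace X] [MeasurableSpace X]
    {μ : Measure X} {u : X → ℝ} {K : Set X} (hK : IsCompact K)
    (hloc : ∀ x ∈ K, ∃ t ∈ 𝓝 x, HasLinearSublevelMeasure μ u t) :
    HasLinearSublevelMeasure μ u K :=
  hK.induction_on ⟨0, ENNReal.zero_ne_top, fun _ _ => by simp⟩
    (fun _ _ hst ht => ht.mono hst) (fun _ _ hs ht => hs.union ht)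
    fun x hx =>
      let ⟨t, ht, htu⟩ := hloc x hx
      ⟨t, mem_nhdsWithin_of_mem_nhds ht, htu⟩

theorem exists_mem_nhds_hasLinearSublevelMeasure_of_ne_zero {X : Type*} [TopologicalSpace X]
    [MeasurableSpace X] {μ : Measure X} [IsLocallyFiniteMeasure μ] {u : X → ℝ} {z : X}
    (hu : ContinuousAt u z) (hz : u z ≠ 0) :
    ∃ t ∈ 𝓝 z, HasLinearSublevelMeasure μ u t := by
  obtain ⟨t, ht, hμt⟩ := μ.finiteAt_nhds z
  have hfar : {x | |u z| / 2 < |u x|} ∈ 𝓝 z :=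
    hu.abs.preimage_mem_nhds (Ioi_mem_nhds (half_lt_self (abs_pos.2 hz)))
  refine ⟨t ∩ {x | |u z| / 2 < |u x|}, inter_mem ht hfar,
    .of_le_abs (measure_lt_top_of_subset inter_subset_left hμt.ne).ne (by positivity)
      fun x hx => hx.2.le⟩

theorem HasStrictFDerivAt.exists_mem_nhds_mul_le_addHaar_image {F : Type*}
    [NormedAddCommGroup F] [NormedSpace ℝ F] [FiniteDimensional ℝ F] [MeasurableSpace F]
    [BorelSpace F] (μ : Measure F) [μ.IsAddHaarMeasure] {f : F → F} {A : F →L[ℝ] F} {z : F}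
    (hf : HasStrictFDerivAt f A z) {m : ℝ≥0} (hm : (m : ℝ≥0∞) < ENNReal.ofReal |A.det|) :
    ∃ t ∈ 𝓝 z, ∀ s ⊆ t, (m : ℝ≥0∞) * μ s ≤ μ (f '' s) := by
  obtain ⟨c, hc, hcpos⟩ :=
    ((mul_le_addHaar_image_of_lt_det μ A hm).and self_mem_nhdsWithin).exists
  obtain ⟨t, ht, hft⟩ := hf.approximates_deriv_on_nhds (Or.inr hcpos)
  exact ⟨t, ht, fun s hst => hc s f (hft.mono_set hst)⟩

section InnerProductSpace

variable {E : Type*} [NormedAddCommGroup E] [InnerProductSpace ℝ E]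

theorem HasStrictFDerivAt.exists_straightening [CompleteSpace E] {u : E → ℝ} {L : E →L[ℝ] ℝ}
    {z : E} (hu : HasStrictFDerivAt u L z) (hL : L ≠ 0) :
    ∃ (e : E) (c : ℝ) (Φ : E → E), ‖e‖ = 1 ∧ 0 < c ∧
      HasStrictFDerivAt Φ (ContinuousLinearMap.id ℝ E) z ∧ ∀ x, ⟪e, Φ x⟫_ℝ = c * u x := by
  set g : E := (InnerProductSpace.toDual ℝ E).symm L
  have hg : g ≠ 0 := by simpa [g] using hL
  set e := ‖g‖⁻¹ • g
  have he : ‖e‖ = 1 := norm_smul_inv_norm hg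
  refine ⟨e, ‖g‖⁻¹, fun x => x + (‖g‖⁻¹ * u x - ⟪e, x⟫_ℝ) • e, he, by positivity, ?_, fun x => ?_⟩
  · have hflat : HasStrictFDerivAt (fun x => ‖g‖⁻¹ * u x - ⟪e, x⟫_ℝ) (0 : E →L[ℝ] ℝ) z := by
      have hL' : ‖g‖⁻¹ • L - innerSL ℝ e = 0 := by
        ext v
        simp [e, g, InnerProductSpace.toDual_symm_apply]
      have hdiff := (hu.const_mul ‖g‖⁻¹).sub (innerSL ℝ e).hasStrictFDerivAt
      rwa [hL'] at hdiff
    have hsum := (hasStrictFDerivAt_id z).add (hflat.smul_const e)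
    rwa [ContinuousLinearMap.zero_smulRight, add_zero] at hsum
  · simp only [inner_add_right, real_inner_smul_right, real_inner_self_eq_norm_sq, he]
    ring

variable [FiniteDimensional ℝ E] [MeasurableSpace E] [BorelSpace E]

theorem hasLinearSublevelMeasure_inner {e : E} (he : ‖e‖ = 1) {s : Set E} (hs : IsBounded s) :
    HasLinearSublevelMeasure volume (fun y => ⟪e, y⟫_ℝ) s := by
  obtain ⟨R, hR⟩ := hs.subset_closedBall 0
  set K := ℝ ∙ e
  have hK : Module.finrank ℝ K = 1 := finrank_span_singleton (norm_ne_zero_iff.1 (by simp [he]))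
  have hprojK (y : E) : ‖K.orthogonalProjectionOnto y‖ = |⟪e, y⟫_ℝ| := by
    simp [K, Submodule.starProjection_unit_singleton ℝ he, norm_smul, he]
  set D : E → K × Kᗮ := fun y => WithLp.ofLp (K.orthogonalDecomposition y)
  have hD : MeasurePreserving D volume volume :=
    (WithLp.volume_preserving_ofLp _ _).comp (LinearIsometryEquiv.measurePreserving _)
  refine ⟨volume (closedBall (0 : K) 1) * volume (closedBall (0 : Kᗮ) R),
    ENNReal.mul_ne_top measure_closedBall_lt_top.ne measure_closedBall_lt_top.ne,
    fun δ hδ => ?_⟩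
  have hslab : {y ∈ s | |⟪e, y⟫_ℝ| ≤ δ} ⊆ D ⁻¹' (closedBall 0 δ ×ˢ closedBall 0 R) := by
    rintro y ⟨hys, hyδ⟩
    simp only [D, mem_preimage, mem_prod, mem_closedBall_zero_iff,
      Submodule.orthogonalDecomposition_apply, WithLp.ofLp_toLp]
    exact ⟨(hprojK y).trans_le hyδ, (Submodule.norm_orthogonalProjectionOnto_apply_le Kᗮ y).trans
      (mem_closedBall_zero_iff.1 (hR hys))⟩
  calc volume {y ∈ s | |⟪e, y⟫_ℝ| ≤ δ}
      ≤ volume (D ⁻¹' (closedBall 0 δ ×ˢ closedBall 0 R)) := measure_mono hslab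
    _ = volume (closedBall (0 : K) δ) * volume (closedBall (0 : Kᗮ) R) := by
      rw [hD.measure_preimage
          (measurableSet_closedBall.prod measurableSet_closedBall).nullMeasurableSet,
        Measure.volume_eq_prod, Measure.prod_prod]
    _ = _ := by
      rw [Measure.addHaar_closedBall' _ _ hδ.le, hK, pow_one]
      ring

theorem exists_mem_nhds_hasLinearSublevelMeasure_of_hasStrictFDerivAt {u : E → ℝ}
    {L : E →L[ℝ] ℝ} {z : E} (hu : HasStrictFDerivAt u L z) (hL : L ≠ 0) :
    ∃ t ∈ 𝓝 z, HasLinearSublevelMeasure volume u t := by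
  obtain ⟨e, c, Φ, he, hc, hΦ, hΦe⟩ := hu.exists_straightening hL
  obtain ⟨t, ht, hΦt⟩ := hΦ.exists_mem_nhds_mul_le_addHaar_image volume (m := 2⁻¹)
    (by simp [ContinuousLinearMap.det])
  obtain ⟨C, hC, hCδ⟩ := hasLinearSublevelMeasure_inner he (isBounded_ball (x := Φ z) (r := 1))
  refine ⟨t ∩ Φ ⁻¹' ball (Φ z) 1, inter_mem ht (hΦ.continuousAt.preimage_mem_nhds
      (ball_mem_nhds _ one_pos)), 2 * C * ENNReal.ofReal c, by finiteness, fun δ hδ => ?_⟩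
  set S := {x ∈ t ∩ Φ ⁻¹' ball (Φ z) 1 | |u x| ≤ δ}
  have hΦS : Φ '' S ⊆ {y ∈ ball (Φ z) 1 | |⟪e, y⟫_ℝ| ≤ c * δ} := by
    rintro _ ⟨x, ⟨⟨-, hxΦ⟩, hxδ⟩, rfl⟩
    refine ⟨hxΦ, ?_⟩
    rw [hΦe, abs_mul, abs_of_pos hc]
    gcongr
  calc volume S
      = 2 * ((2⁻¹ : ℝ≥0) * volume S) := by
        rw [ENNReal.coe_inv two_ne_zero, ← mul_assoc]
        norm_num [ENNReal.mul_inv_cancel]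
    _ ≤ 2 * volume (Φ '' S) := by gcongr; exact hΦt S fun x hx => hx.1.1
    _ ≤ 2 * (C * ENNReal.ofReal (c * δ)) := by
        gcongr; exact (measure_mono hΦS).trans (hCδ _ (by positivity))
    _ = 2 * C * ENNReal.ofReal c * ENNReal.ofReal δ := by
        rw [ENNReal.ofReal_mul (by positivity)]
        ring

end InnerProductSpace

theorem statement8_general {N : ℕ} (Ω U : Set (EuclideanSpace ℝ (Fin N)))
    (hΩb : Bornology.IsBounded Ω)
    (hUo : IsOpen U) (hΩU : closure Ω ⊆ U)
    (u : EuclideanSpace ℝ (Fin N) → ℝ) (hu : ContDiffOn ℝ 1 u U)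
    (hnd : ∀ x ∈ closure Ω, u x = 0 → gradient u x ≠ 0) :
    ∃ κ : ℝ, 0 < κ ∧ ∀ δ : ℝ, 0 < δ →
      volume {x ∈ Ω | |u x| ≤ δ} ≤ ENNReal.ofReal (κ * δ) := by
  have hloc : ∀ x ∈ closure Ω, ∃ t ∈ 𝓝 x, HasLinearSublevelMeasure volume u t := by
    intro x hx
    have hux : ContDiffAt ℝ 1 u x := hu.contDiffAt (hUo.mem_nhds (hΩU hx))
    by_cases hx0 : u x = 0
    · refine exists_mem_nhds_hasLinearSublevelMeasure_of_hasStrictFDerivAt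
        (hux.hasStrictFDerivAt one_ne_zero) fun h => hnd x hx hx0 ?_
      simp [gradient, h]
    · exact exists_mem_nhds_hasLinearSublevelMeasure_of_ne_zero hux.continuousAt hx0
  obtain ⟨C, hC, hCδ⟩ := (hΩb.isCompact_closure.hasLinearSublevelMeasure hloc).mono subset_closure
  refine ⟨C.toReal + 1, by positivity, fun δ hδ => (hCδ δ hδ).trans ?_⟩
  rw [ENNReal.ofReal_mul (by positivity)]
  gcongr
  exact (ENNReal.le_ofReal_iff_toReal_le hC (by positivity)).2 (le_add_of_nonneg_right zero_le_one)

/-- If `u ∈ C¹(U)` with `closure Ω ⊆ U` and `∇u ≠ 0` at every zero of `u` in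
`closure Ω`, then `λ({x ∈ Ω : |u(x)| ≤ δ}) ≤ κ δ` for some `κ > 0` and all `δ > 0`. -/
theorem statement8 {N : ℕ} (Ω U : Set (EuclideanSpace ℝ (Fin N)))
    (hΩo : IsOpen Ω) (hΩb : Bornology.IsBounded Ω)
    (hUo : IsOpen U) (hΩU : closure Ω ⊆ U)
    (u : EuclideanSpace ℝ (Fin N) → ℝ) (hu : ContDiffOn ℝ 1 u U)
    (hnd : ∀ x ∈ closure Ω, u x = 0 → gradient u x ≠ 0) :
    ∃ κ : ℝ, 0 < κ ∧ ∀ δ : ℝ, 0 < δ →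
      volume {x ∈ Ω | |u x| ≤ δ} ≤ ENNReal.ofReal (κ * δ) :=
  statement8_general Ω U hΩb hUo hΩU u hu hnd
end

section
/- Let Ω ⊂ ℝ^N be a bounded open set, let U ⊂ ℝ^N be an open set containing the closure of Ω, and let u ∈ C¹(U) be such that ∇u(x) ≠ 0 for every x in the closure of Ω with u(x) = 0. Then for every s ∈ (0,1) and every p with 1 ≤ p < 1/s, the function x ↦ |u(x)|^{−sp} is integrable on Ω, i.e. ∫_Ω |u(x)|^{−sp} dx < ∞ (the zero set of u in Ω has Lebesgue measure zero, so the integrand is defined almost everywhere). -/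
open MeasureTheory Set Metric Filter Topology
open scoped RealInnerProductSpace ENNReal

/-!
Away from the zero set `|u|` is bounded below, so only neighbourhoods of zeros `x₀` of `u` matter.
There, with `a = ∇u(x₀) ≠ 0`, the map `F x = x + ((u x - ⟪a, x⟫) / ‖a‖²) a` satisfies
`⟪a, F x⟫ = u x` and `DF(x₀) = id`, so on a small neighbourhood `V` it is injective with Jacobian
bounded below. It maps the zero set into the hyperplane `a⊥`, which forces that set to be null,
and the change of variables `y = F x` bounds `∫_V |u|^r` by a multiple of the integral of
`|⟪a, y⟫|^r` over a bounded set: finite for `r > -1`, by Fubini in an orthonormal basis containing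
`a / ‖a‖`. Compactness of `closure Ω` glues the local statements.
-/

theorem integrableOn_abs_rpow_Icc {r : ℝ} (hr : -1 < r) (R : ℝ) :
    IntegrableOn (fun t : ℝ => |t| ^ r) (Icc (-R) R) := by
  have hpos : IntervalIntegrable (fun t : ℝ => |t| ^ r) volume 0 |R| :=
    (intervalIntegrable_congr fun t ht => by
      rw [uIoc_of_le (abs_nonneg R)] at ht
      simp [abs_of_pos ht.1]).1 (intervalIntegral.intervalIntegrable_rpow' hr)
  have hneg : IntervalIntegrable (fun t : ℝ => |t| ^ r) volume (-|R|) 0 := by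
    simpa using (IntervalIntegrable.iff_comp_neg).1 hpos.symm
  exact ((intervalIntegrable_iff_integrableOn_Icc_of_le (by simp)).1 (hneg.trans hpos)).mono_set
    (Icc_subset_Icc (neg_le_neg (le_abs_self R)) (le_abs_self R))

theorem integrableOn_abs_rpow_eval_pi_Icc {ι : Type*} [Fintype ι] (i : ι) {r : ℝ}
    (hr : -1 < r) (R : ℝ) :
    IntegrableOn (fun z : ι → ℝ => |z i| ^ r) (univ.pi fun _ => Icc (-R) R) := by
  rw [IntegrableOn, volume_pi, Measure.restrict_pi_pi]
  exact integrable_comp_eval (μ := fun _ => volume.restrict (Icc (-R) R))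
    (integrableOn_abs_rpow_Icc hr R)

section NormedSpace

variable {E : Type*} [NormedAddCommGroup E] [NormedSpace ℝ E] [FiniteDimensional ℝ E]

theorem exists_isOpen_injOn_le_abs_det_fderiv {F : E → E} {U : Set E} (hU : IsOpen U)
    (hF : ContDiffOn ℝ 1 F U) {x₀ : E} (hx₀ : x₀ ∈ U) {L : E ≃L[ℝ] E}
    (hL : HasFDerivAt F (L : E →L[ℝ] E) x₀) :
    ∃ V ⊆ U, IsOpen V ∧ x₀ ∈ V ∧ InjOn F V ∧ Bornology.IsBounded (F '' V) ∧
      ∃ δ > 0, ∀ x ∈ V, δ ≤ |(fderiv ℝ F x).det| := by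
  have hFx₀ : ContDiffAt ℝ 1 F x₀ := hF.contDiffAt (hU.mem_nhds hx₀)
  set P := hFx₀.toOpenPartialHomeomorph F hL one_ne_zero
  have hdetL : 0 < |(L : E →L[ℝ] E).det| := abs_pos.2 (L.toLinearEquiv.isUnit_det').ne_zero
  have hdet : ∀ᶠ x in 𝓝 x₀, |(L : E →L[ℝ] E).det| / 2 < |(fderiv ℝ F x).det| := by
    have hcont : ContinuousAt (fun x => |(fderiv ℝ F x).det|) x₀ :=
      (ContinuousLinearMap.continuous_det.abs.continuousAt).comp
        ((hF.continuousOn_fderiv_of_isOpen hU le_rfl).continuousAt (hU.mem_nhds hx₀))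
    exact continuousAt_const.eventually_lt hcont (by rw [hL.fderiv]; linarith)
  have hbdd : ∀ᶠ x in 𝓝 x₀, F x ∈ ball (F x₀) 1 :=
    hFx₀.continuousAt.preimage_mem_nhds (ball_mem_nhds _ one_pos)
  have hsrc : P.source ∈ 𝓝 x₀ :=
    P.open_source.mem_nhds (hFx₀.mem_toOpenPartialHomeomorph_source hL one_ne_zero)
  obtain ⟨V, hVsub, hVo, hx₀V⟩ :=
    _root_.mem_nhds_iff.1 (inter_mem (inter_mem (hU.mem_nhds hx₀) hsrc) (hdet.and hbdd))
  refine ⟨V, fun x hx => (hVsub hx).1.1, hVo, hx₀V, P.injOn.mono fun x hx => (hVsub hx).1.2,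
    isBounded_ball.subset (image_subset_iff.2 fun x hx => (hVsub hx).2.2),
    _, half_pos hdetL, fun x hx => (hVsub hx).2.1.le⟩

variable [MeasurableSpace E] [BorelSpace E] (μ : Measure E) [μ.IsAddHaarMeasure]

theorem ofReal_mul_addHaar_le_addHaar_image {f : E → E} {f' : E → E →L[ℝ] E} {s : Set E}
    (hs : MeasurableSet s) (hf' : ∀ x ∈ s, HasFDerivWithinAt f (f' x) s x) (hf : InjOn f s)
    {δ : ℝ} (hδ : ∀ x ∈ s, δ ≤ |(f' x).det|) :
    ENNReal.ofReal δ * μ s ≤ μ (f '' s) := by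
  rw [← lintegral_abs_det_fderiv_eq_addHaar_image μ hs hf' hf, ← setLIntegral_const]
  exact setLIntegral_mono' hs fun x hx => ENNReal.ofReal_le_ofReal (hδ x hx)

end NormedSpace

section InnerProductSpace

variable {E : Type*} [NormedAddCommGroup E] [InnerProductSpace ℝ E]

noncomputable def straighten (u : E → ℝ) (a x : E) : E :=
  x + ((u x - ⟪a, x⟫) * (‖a‖ ^ 2)⁻¹) • a

theorem inner_straighten (u : E → ℝ) {a : E} (ha : a ≠ 0) (x : E) :
    ⟪a, straighten u a x⟫ = u x := by
  simp only [straighten, inner_add_right, real_inner_smul_right, real_inner_self_eq_norm_sq]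
  field_simp
  ring

theorem ContDiffOn.straighten {u : E → ℝ} {U : Set E} {n : WithTop ℕ∞}
    (hu : ContDiffOn ℝ n u U) (a : E) : ContDiffOn ℝ n (straighten u a) U :=
  contDiffOn_id.add (((hu.sub (innerSL ℝ a).contDiff.contDiffOn).mul contDiffOn_const).smul
    contDiffOn_const)

theorem HasGradientAt.hasFDerivAt_straighten [CompleteSpace E] {u : E → ℝ} {a x : E}
    (h : HasGradientAt u a x) :
    HasFDerivAt (straighten u a) (ContinuousLinearMap.id ℝ E) x := by
  have hφ := ((hasGradientAt_iff_hasFDerivAt.1 h).sub (innerSL ℝ a).hasFDerivAt).mul_const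
    (‖a‖ ^ 2)⁻¹
  convert (hasFDerivAt_id x).add (hφ.smul_const a) using 1
  · rfl
  · ext v
    simp

variable [FiniteDimensional ℝ E] [MeasurableSpace E] [BorelSpace E]

theorem integrableOn_abs_inner_rpow_of_isBounded (a : E) {r : ℝ} (hr : -1 < r) {s : Set E}
    (hs : Bornology.IsBounded s) : IntegrableOn (fun y => |⟪a, y⟫| ^ r) s := by
  rcases eq_or_ne a 0 with rfl | ha
  · simpa using integrableOn_const (C := (0 : ℝ) ^ r) hs.measure_lt_top.ne
  set e := ‖a‖⁻¹ • a
  have he : Orthonormal ℝ ((↑) : ({e} : Set E) → E) := by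
    simp [e, norm_smul, ha]
  obtain ⟨v, b, hev, hb⟩ := he.exists_orthonormalBasis_extension
  let i : v := ⟨e, hev rfl⟩
  obtain ⟨R, hR⟩ := hs.subset_closedBall 0
  let T : E ≃ᵐ (v → ℝ) := b.measurableEquiv.trans (MeasurableEquiv.toLp 2 _).symm
  have hT : MeasurePreserving T :=
    (EuclideanSpace.volume_preserving_symm_measurableEquiv_toLp v).comp
      b.measurePreserving_measurableEquiv
  have hTi : ∀ y, T y i = ‖a‖⁻¹ * ⟪a, y⟫ := fun y => by
    change b.repr y i = _
    rw [b.repr_apply_apply, hb, real_inner_smul_left]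
  have hbox : IntegrableOn (fun y => |T y i| ^ r) (T ⁻¹' univ.pi fun _ => Icc (-R) R) :=
    (hT.integrableOn_comp_preimage T.measurableEmbedding).2
      (integrableOn_abs_rpow_eval_pi_Icc i hr R)
  have hsub : s ⊆ T ⁻¹' univ.pi fun _ => Icc (-R) R := fun y hy j _ => by
    have h : |T y j| ≤ R := calc
      |T y j| ≤ ‖b.repr y‖ := PiLp.norm_apply_le (b.repr y) j
      _ = ‖y‖ := b.repr.norm_map y
      _ ≤ R := by simpa using hR hy
    exact abs_le.1 h
  have hfun : (fun y => |⟪a, y⟫| ^ r) = fun y => ‖a‖ ^ r * |T y i| ^ r := funext fun y => by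
    rw [hTi, abs_mul, abs_inv, abs_norm, Real.mul_rpow (by positivity) (abs_nonneg _),
      Real.inv_rpow (norm_nonneg a), mul_inv_cancel_left₀ (by positivity)]
  rw [hfun]
  exact (hbox.mono_set hsub).const_mul _

theorem exists_mem_nhds_volume_zero_integrableOn_abs_rpow_of_gradient_ne_zero {u : E → ℝ}
    {U : Set E} (hU : IsOpen U) (hu : ContDiffOn ℝ 1 u U) {x₀ : E} (hx₀ : x₀ ∈ U)
    (hgrad : gradient u x₀ ≠ 0) :
    ∃ V ∈ 𝓝 x₀, volume {x ∈ V | u x = 0} = 0 ∧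
      ∀ r : ℝ, -1 < r → IntegrableOn (fun x => |u x| ^ r) V := by
  set a := gradient u x₀
  set F := straighten u a
  have hFx₀ : HasFDerivAt F (ContinuousLinearEquiv.refl ℝ E : E →L[ℝ] E) x₀ :=
    ((hu.contDiffAt (hU.mem_nhds hx₀)).differentiableAt one_ne_zero).hasGradientAt
      |>.hasFDerivAt_straighten
  obtain ⟨V, hVU, hVo, hx₀V, hinj, hbdd, δ, hδ, hdet⟩ :=
    exists_isOpen_injOn_le_abs_det_fderiv hU (hu.straighten a) hx₀ hFx₀
  have hF' : ∀ x ∈ V, HasFDerivAt F (fderiv ℝ F x) x := fun x hx =>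
    ((hu.straighten a).contDiffAt (hU.mem_nhds (hVU hx))).differentiableAt one_ne_zero
      |>.hasFDerivAt
  have huV : ContinuousOn u V := hu.continuousOn.mono hVU
  refine ⟨V, hVo.mem_nhds hx₀V, ?_, fun r hr => ?_⟩
  · set Z := {x ∈ V | u x = 0}
    have hZ : MeasurableSet Z := by
      have hZ_eq : Z = V \ (V ∩ u ⁻¹' {0}ᶜ) := by ext; simp [Z]
      rw [hZ_eq]
      exact hVo.measurableSet.diff
        (huV.isOpen_inter_preimage hVo isOpen_compl_singleton).measurableSet
    have hFZ : volume (F '' Z) = 0 := by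
      refine measure_mono_null (image_subset_iff.2 fun x hx => ?_)
        (Measure.addHaar_submodule volume (ℝ ∙ a)ᗮ ?_)
      · change F x ∈ (ℝ ∙ a)ᗮ
        rw [Submodule.mem_orthogonal_singleton_iff_inner_right, inner_straighten u hgrad, hx.2]
      · simpa [Submodule.orthogonal_eq_top_iff] using hgrad
    have hle := ofReal_mul_addHaar_le_addHaar_image volume hZ
      (fun x hx => (hF' x hx.1).hasFDerivWithinAt) (hinj.mono (sep_subset _ _))
      fun x hx => hdet x hx.1
    rw [hFZ, nonpos_iff_eq_zero, mul_eq_zero] at hle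
    exact hle.resolve_left (by simpa using hδ)
  · have hg := integrableOn_abs_inner_rpow_of_isBounded a hr hbdd
    rw [integrableOn_image_iff_integrableOn_abs_det_fderiv_smul volume hVo.measurableSet
      (fun x hx => (hF' x hx).hasFDerivWithinAt) hinj] at hg
    refine (hg.const_mul δ⁻¹).mono'
      ((huV.aemeasurable hVo.measurableSet).abs.pow_const r).aestronglyMeasurable
      ((ae_restrict_mem hVo.measurableSet).mono fun x hx => ?_)
    rw [inner_straighten u hgrad, smul_eq_mul, Real.norm_of_nonneg (by positivity), ← mul_assoc]
    exact le_mul_of_one_le_left (by positivity) ((one_le_inv_mul₀ hδ).2 (hdet x hx))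

theorem exists_mem_nhds_volume_zero_integrableOn_abs_rpow_of_ne_zero {u : E → ℝ} {U : Set E}
    (hU : IsOpen U) (hu : ContinuousOn u U) {x₀ : E} (hx₀ : x₀ ∈ U) (h : u x₀ ≠ 0) :
    ∃ V ∈ 𝓝 x₀, volume {x ∈ V | u x = 0} = 0 ∧
      ∀ r : ℝ, IntegrableOn (fun x => |u x| ^ r) V := by
  obtain ⟨ρ, hρ, hsub⟩ := nhds_basis_closedBall.mem_iff.1 (inter_mem (hU.mem_nhds hx₀)
    ((hu.continuousAt (hU.mem_nhds hx₀)).eventually_ne h))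
  refine ⟨closedBall x₀ ρ, closedBall_mem_nhds x₀ hρ,
    measure_mono_null (fun x hx => ((hsub hx.1).2 hx.2).elim) measure_empty, fun r => ?_⟩
  exact ((hu.mono fun x hx => (hsub hx).1).abs.rpow_const
    fun x hx => Or.inl (abs_pos.2 (hsub hx).2).ne').integrableOn_compact
    (isCompact_closedBall x₀ ρ)

theorem exists_mem_nhds_volume_zero_integrableOn_abs_rpow {u : E → ℝ} {U : Set E}
    (hU : IsOpen U) (hu : ContDiffOn ℝ 1 u U) {x₀ : E} (hx₀ : x₀ ∈ U)
    (hnd : u x₀ = 0 → gradient u x₀ ≠ 0) :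
    ∃ V ∈ 𝓝 x₀, volume {x ∈ V | u x = 0} = 0 ∧
      ∀ r : ℝ, -1 < r → IntegrableOn (fun x => |u x| ^ r) V := by
  by_cases h0 : u x₀ = 0
  · exact exists_mem_nhds_volume_zero_integrableOn_abs_rpow_of_gradient_ne_zero hU hu hx₀
      (hnd h0)
  · obtain ⟨V, hV, hnull, hint⟩ :=
      exists_mem_nhds_volume_zero_integrableOn_abs_rpow_of_ne_zero hU hu.continuousOn hx₀ h0
    exact ⟨V, hV, hnull, fun r _ => hint r⟩

end InnerProductSpace

theorem statement9_general {N : ℕ} (Ω U : Set (EuclideanSpace ℝ (Fin N)))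
    (hΩb : Bornology.IsBounded Ω)
    (hUo : IsOpen U) (hΩU : closure Ω ⊆ U)
    (u : EuclideanSpace ℝ (Fin N) → ℝ) (hu : ContDiffOn ℝ 1 u U)
    (hnd : ∀ x ∈ closure Ω, u x = 0 → gradient u x ≠ 0) :
    volume {x ∈ Ω | u x = 0} = 0 ∧
    ∀ s : ℝ, 0 < s → s < 1 → ∀ p : ℝ, 1 ≤ p → p < 1 / s →
      IntegrableOn (fun x => |u x| ^ (-(s * p))) Ω := by
  have hK : IsCompact (closure Ω) := hΩb.isCompact_closure
  choose! V hV hnull hint using fun x (hx : x ∈ closure Ω) =>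
    exists_mem_nhds_volume_zero_integrableOn_abs_rpow hUo hu (hΩU hx) (hnd x hx)
  refine ⟨?_, fun s hs _ p _ hps => ?_⟩
  · have hZ : IsCompact (closure Ω ∩ u ⁻¹' {0}) := hK.of_isClosed_subset
      ((hu.continuousOn.mono hΩU).preimage_isClosed_of_isClosed isClosed_closure
        isClosed_singleton) inter_subset_left
    have hZ0 : volume (closure Ω ∩ u ⁻¹' {0}) = 0 := by
      refine hZ.measure_zero_of_nhdsWithin fun x hx =>
        ⟨_, inter_mem_nhdsWithin _ (hV x hx.1), ?_⟩
      refine measure_mono_null ?_ (hnull x hx.1)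
      exact fun y hy => ⟨hy.2, hy.1.2⟩
    refine measure_mono_null ?_ hZ0
    exact fun x hx => ⟨subset_closure hx.1, hx.2⟩
  · have hr : -1 < -(s * p) := by nlinarith [(lt_div_iff₀ hs).1 hps]
    have hloc : LocallyIntegrableOn (fun x => |u x| ^ (-(s * p))) (closure Ω) := fun x hx =>
      ⟨V x, mem_nhdsWithin_of_mem_nhds (hV x hx), hint x hx _ hr⟩
    exact (hloc.integrableOn_isCompact hK).mono_set subset_closure

/-- If `u ∈ C¹(U)` with `closure Ω ⊆ U` and `∇u ≠ 0` at every zero of `u` in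
`closure Ω`, then for `s ∈ (0,1)` and `1 ≤ p < 1/s` the function `|u|^{-sp}` is integrable
on `Ω` (the zero set of `u` in `Ω` being Lebesgue-null). -/
theorem statement9 {N : ℕ} (Ω U : Set (EuclideanSpace ℝ (Fin N)))
    (hΩo : IsOpen Ω) (hΩb : Bornology.IsBounded Ω)
    (hUo : IsOpen U) (hΩU : closure Ω ⊆ U)
    (u : EuclideanSpace ℝ (Fin N) → ℝ) (hu : ContDiffOn ℝ 1 u U)
    (hnd : ∀ x ∈ closure Ω, u x = 0 → gradient u x ≠ 0) :
    volume {x ∈ Ω | u x = 0} = 0 ∧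
    ∀ s : ℝ, 0 < s → s < 1 → ∀ p : ℝ, 1 ≤ p → p < 1 / s →
      IntegrableOn (fun x => |u x| ^ (-(s * p))) Ω :=
  statement9_general Ω U hΩb hUo hΩU u hu hnd
end

section
/- Let Ω ⊂ ℝ^N be a bounded open set, let U ⊂ ℝ^N be an open set containing the closure of Ω, let 1 < q < 2, and let u ∈ C¹(U) be such that ∇u(x) ≠ 0 for every x in the closure of Ω with u(x) = 0. Then for all bounded measurable functions v, w : Ω → ℝ, the limit lim_{t→0} (1/t) ∫_Ω ( |u+tw|^{q−2}(u+tw) − |u|^{q−2}u ) v dx exists and equals (q−1) ∫_Ω |u|^{q−2} v w dx, the latter integral being absolutely convergent. -/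
/-!
Near a zero of `u` in `closure Ω` some partial derivative `∂ᵢu` keeps a fixed sign on a small
ball, so every line parallel to `eᵢ` meets `{|u| ≤ s}` in an interval of length `O(s)`; by Fubini
the ball meets `{|u| ≤ s}` in measure `O(s)`, and compactness of `closure Ω` gives
`|{x ∈ Ω | |u x| ≤ s}| = O(s)` for small `s`. In particular `u ≠ 0` a.e., and summing over the
dyadic shells `{2⁻ⁿ⁻¹δ < |u| ≤ 2⁻ⁿδ}` shows that `|u|^(q-2)` is integrable because `q - 2 > -1`.
Finally `φ y = |y|^(q-2) y` satisfies `|φ (a + h) - φ a| ≤ 6 (|a|/2)^(q-2) |h|`, so the difference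
quotients are dominated by a multiple of `|u|^(q-2)` and dominated convergence applies, with
pointwise limit `φ' u · w v = (q-1) |u|^(q-2) w v`.
-/

open MeasureTheory Set Filter
open scoped NNReal ENNReal

lemma volume_abs_le_le_of_le_deriv {g g' : ℝ → ℝ} {S : Set ℝ} (hS : Convex ℝ S) {c : ℝ}
    (hc : 0 < c) (hg : ∀ t ∈ S, HasDerivAt g (g' t) t) (hcg : ∀ t ∈ S, c ≤ g' t) (s : ℝ) :
    volume {t ∈ S | |g t| ≤ s} ≤ ENNReal.ofReal (2 * s / c) := by
  have hgap : ∀ x ∈ {t ∈ S | |g t| ≤ s}, ∀ y ∈ {t ∈ S | |g t| ≤ s}, x ≤ y → y - x ≤ 2 * s / c := by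
    rintro x ⟨hxS, hx⟩ y ⟨hyS, hy⟩ hxy
    have hmv := hS.mul_sub_le_image_sub_of_le_deriv
      (fun t ht => (hg t ht).continuousAt.continuousWithinAt)
      (fun t ht => (hg t (interior_subset ht)).differentiableAt.differentiableWithinAt)
      (fun t ht => (hg t (interior_subset ht)).deriv ▸ hcg t (interior_subset ht)) x hxS y hyS hxy
    rw [le_div_iff₀ hc]
    linarith [abs_le.1 hx, abs_le.1 hy]
  refine (Real.volume_le_diam _).trans (Metric.ediam_le fun x hx y hy => ?_)
  rw [edist_dist, Real.dist_eq]
  apply ENNReal.ofReal_le_ofReal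
  rcases le_total x y with hxy | hyx
  · rw [abs_sub_comm, abs_of_nonneg (sub_nonneg.2 hxy)]; exact hgap x hx y hy hxy
  · rw [abs_of_nonneg (sub_nonneg.2 hyx)]; exact hgap y hy x hx hyx

lemma volume_le_mul_of_volume_lineSlice_le {M : ℕ} (i : Fin (M + 1))
    {T : Set (EuclideanSpace ℝ (Fin (M + 1)))} (hT : MeasurableSet T)
    {z : EuclideanSpace ℝ (Fin (M + 1))} {r : ℝ} (hr : 0 ≤ r) (hTz : T ⊆ Metric.ball z r)
    {L : ℝ≥0∞} (hL : ∀ a, volume {t : ℝ | a + t • EuclideanSpace.single i 1 ∈ T} ≤ L) :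
    volume T ≤ L * ENNReal.ofReal ((2 * r) ^ M) := by
  set E := (MeasurableEquiv.toLp 2 (Fin (M + 1) → ℝ)).symm.trans
    (MeasurableEquiv.piFinSuccAbove (fun _ : Fin (M + 1) => ℝ) i)
  have hE : MeasurePreserving E volume volume :=
    (volume_preserving_piFinSuccAbove (fun _ : Fin (M + 1) => ℝ) i).comp
      (EuclideanSpace.volume_preserving_symm_measurableEquiv_toLp (Fin (M + 1)))
  have hline : ∀ t y, E.symm (t, y) = E.symm (0, y) + t • EuclideanSpace.single i 1 := by
    intro t y
    ext j
    change Fin.insertNth (α := fun _ => ℝ) i t y j =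
      Fin.insertNth (α := fun _ => ℝ) i 0 y j + t * EuclideanSpace.single i 1 j
    rcases Fin.eq_self_or_eq_succAbove i j with rfl | ⟨k, rfl⟩
    · simp
    · simp [Fin.succAbove_ne]
  set B := Metric.closedBall (fun j => z (i.succAbove j)) r
  have hsupp : ∀ t y, E.symm (t, y) ∈ T → y ∈ B := fun t y hty =>
    (dist_pi_le_iff hr).2 fun j =>
      (show y j = E.symm (t, y) (i.succAbove j) from
        (Fin.insertNth_apply_succAbove (α := fun _ => ℝ) ..).symm) ▸
        (PiLp.dist_apply_le ..).trans (Metric.mem_ball.1 (hTz hty)).le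
  have hslice : ∀ y,
      volume ((fun t => (t, y)) ⁻¹' (E.symm ⁻¹' T)) ≤ B.indicator (fun _ => L) y := by
    intro y
    by_cases hy : y ∈ B
    · rw [indicator_of_mem hy]
      convert hL (E.symm (0, y)) using 2
      ext t
      simp only [mem_preimage, mem_ofPred_eq, ← hline]
    · rw [indicator_of_notMem hy, nonpos_iff_eq_zero, measure_eq_zero_iff_ae_notMem]
      exact ae_of_all _ fun t ht => hy (hsupp t y ht)
  calc volume T = volume (E.symm ⁻¹' T) := ((hE.symm E).measure_preimage hT.nullMeasurableSet).symm
    _ = ∫⁻ y, volume ((fun t => (t, y)) ⁻¹' (E.symm ⁻¹' T)) := by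
        rw [Measure.volume_eq_prod, Measure.prod_apply_symm (E.symm.measurable hT)]
    _ ≤ ∫⁻ y, B.indicator (fun _ => L) y := lintegral_mono hslice
    _ = L * ENNReal.ofReal ((2 * r) ^ M) := by
        rw [lintegral_indicator Metric.isClosed_closedBall.measurableSet, setLIntegral_const,
          Real.volume_pi_closedBall _ hr, Fintype.card_fin]

lemma volume_abs_le_le_of_le_fderiv {M : ℕ} (i : Fin (M + 1))
    {u : EuclideanSpace ℝ (Fin (M + 1)) → ℝ} {z : EuclideanSpace ℝ (Fin (M + 1))} {r c : ℝ}
    (hr : 0 ≤ r) (hc : 0 < c) (hu : DifferentiableOn ℝ u (Metric.ball z r))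
    (hcu : ∀ x ∈ Metric.ball z r, c ≤ fderiv ℝ u x (EuclideanSpace.single i 1)) (s : ℝ) :
    volume {x ∈ Metric.ball z r | |u x| ≤ s} ≤
      ENNReal.ofReal (2 * s / c) * ENNReal.ofReal ((2 * r) ^ M) := by
  set e := EuclideanSpace.single (𝕜 := ℝ) i 1
  have hmeas : MeasurableSet {x ∈ Metric.ball z r | |u x| ≤ s} := by
    have hopen : IsOpen (Metric.ball z r ∩ u ⁻¹' {y | s < |y|}) :=
      hu.continuousOn.isOpen_inter_preimage Metric.isOpen_ball
        (isOpen_lt continuous_const continuous_abs)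
    have hdiff : {x ∈ Metric.ball z r | |u x| ≤ s} =
        Metric.ball z r \ (Metric.ball z r ∩ u ⁻¹' {y | s < |y|}) := by
      ext x
      simp [not_lt]
    exact hdiff ▸ Metric.isOpen_ball.measurableSet.diff hopen.measurableSet
  refine volume_le_mul_of_volume_lineSlice_le i hmeas hr (fun x hx => hx.1) fun a => ?_
  have hconv : Convex ℝ {t : ℝ | a + t • e ∈ Metric.ball z r} :=
    ((convex_ball z r).translate_preimage_right a).is_linear_preimage
      (IsLinearMap.isLinearMap_smul' e)
  have hline : ∀ t ∈ {t : ℝ | a + t • e ∈ Metric.ball z r},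
      HasDerivAt (fun t => u (a + t • e)) (fderiv ℝ u (a + t • e) e) t := fun t ht =>
    (hu.differentiableAt (Metric.isOpen_ball.mem_nhds ht)).hasFDerivAt.comp_hasDerivAt t
      (((hasDerivAt_id t).smul_const e).const_add a |>.congr_deriv (one_smul ℝ e))
  exact volume_abs_le_le_of_le_deriv hconv hc hline (fun t ht => hcu _ ht) s

lemma exists_ball_volume_abs_le_le_of_fderiv_pos {M : ℕ} {U : Set (EuclideanSpace ℝ (Fin (M + 1)))}
    (hUo : IsOpen U) {u : EuclideanSpace ℝ (Fin (M + 1)) → ℝ} (hu : ContDiffOn ℝ 1 u U)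
    {z : EuclideanSpace ℝ (Fin (M + 1))} (hz : z ∈ U) (i : Fin (M + 1))
    (hpos : 0 < fderiv ℝ u z (EuclideanSpace.single i 1)) :
    ∃ r > 0, ∃ C : ℝ≥0, ∀ s, volume {x ∈ Metric.ball z r | |u x| ≤ s} ≤ C * ENNReal.ofReal s := by
  set d := fderiv ℝ u z (EuclideanSpace.single i 1)
  have hcont : ContinuousAt (fun x => fderiv ℝ u x (EuclideanSpace.single i 1)) z :=
    ((hu.continuousOn_fderiv_of_isOpen hUo le_rfl).continuousAt (hUo.mem_nhds hz)).clm_apply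
      continuousAt_const
  obtain ⟨r, hr, hball⟩ := Metric.eventually_nhds_iff_ball.1 <|
    (hUo.eventually_mem hz).and (hcont.eventually (lt_mem_nhds (half_lt_self hpos)))
  refine ⟨r, hr, Real.toNNReal (2 / (d / 2) * (2 * r) ^ M), fun s => ?_⟩
  have hdiff : DifferentiableOn ℝ u (Metric.ball z r) := fun x hx =>
    ((hu.differentiableOn one_ne_zero).differentiableAt
      (hUo.mem_nhds (hball x hx).1)).differentiableWithinAt
  refine (volume_abs_le_le_of_le_fderiv i hr.le (half_pos hpos) hdiff
    (fun x hx => (hball x hx).2.le) s).trans_eq ?_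
  rw [ENNReal.ofNNReal_toNNReal, mul_div_right_comm, ENNReal.ofReal_mul (by positivity),
    ENNReal.ofReal_mul (by positivity), mul_right_comm]

lemma gradient_apply_eq_fderiv_single {N : ℕ} (u : EuclideanSpace ℝ (Fin N) → ℝ)
    (z : EuclideanSpace ℝ (Fin N)) (j : Fin N) :
    gradient u z j = fderiv ℝ u z (EuclideanSpace.single j 1) := by
  rw [gradient, ← InnerProductSpace.toDual_symm_apply, EuclideanSpace.inner_single_right]
  simp

lemma exists_ball_volume_abs_le_le {N : ℕ} {U : Set (EuclideanSpace ℝ (Fin N))}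
    (hUo : IsOpen U) {u : EuclideanSpace ℝ (Fin N) → ℝ} (hu : ContDiffOn ℝ 1 u U)
    {z : EuclideanSpace ℝ (Fin N)} (hz : z ∈ U) (hgrad : gradient u z ≠ 0) :
    ∃ r > 0, ∃ C : ℝ≥0, ∀ s, volume {x ∈ Metric.ball z r | |u x| ≤ s} ≤ C * ENNReal.ofReal s := by
  obtain ⟨i, hi⟩ : ∃ i, fderiv ℝ u z (EuclideanSpace.single i 1) ≠ 0 := by
    contrapose! hgrad
    ext j
    simpa [gradient_apply_eq_fderiv_single] using hgrad j
  obtain ⟨M, rfl⟩ : ∃ M, N = M + 1 := Nat.exists_eq_add_one.2 i.pos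
  rcases hi.lt_or_gt with hneg | hpos
  · obtain ⟨r, hr, C, hC⟩ := exists_ball_volume_abs_le_le_of_fderiv_pos hUo hu.neg hz i
      (by rwa [← Pi.neg_def, fderiv_neg, neg_apply, neg_pos])
    exact ⟨r, hr, C, fun s => by simpa only [abs_neg] using hC s⟩
  · exact exists_ball_volume_abs_le_le_of_fderiv_pos hUo hu hz i hpos

lemma IsCompact.exists_pos_forall_le_abs {X : Type*} [TopologicalSpace X] {K : Set X}
    (hK : IsCompact K) {f : X → ℝ} (hf : ContinuousOn f K) (hf0 : ∀ x ∈ K, f x ≠ 0) :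
    ∃ δ > 0, ∀ x ∈ K, δ ≤ |f x| := by
  rcases K.eq_empty_or_nonempty with rfl | hne
  · exact ⟨1, one_pos, by simp⟩
  obtain ⟨x₀, hx₀, hmin⟩ := hK.exists_isMinOn hne hf.abs
  exact ⟨|f x₀|, abs_pos.2 (hf0 x₀ hx₀), fun x hx => hmin hx⟩

lemma exists_volume_abs_le_le {N : ℕ} {Ω U : Set (EuclideanSpace ℝ (Fin N))}
    (hΩb : Bornology.IsBounded Ω) (hUo : IsOpen U) (hΩU : closure Ω ⊆ U)
    {u : EuclideanSpace ℝ (Fin N) → ℝ} (hu : ContDiffOn ℝ 1 u U)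
    (hnd : ∀ x ∈ closure Ω, u x = 0 → gradient u x ≠ 0) :
    ∃ C : ℝ≥0, ∃ δ > 0, ∀ s ≤ δ, volume {x ∈ Ω | |u x| ≤ s} ≤ C * ENNReal.ofReal s := by
  have hKc : IsCompact (closure Ω) := hΩb.isCompact_closure
  have hucl : ContinuousOn u (closure Ω) := hu.continuousOn.mono hΩU
  have hZc : IsCompact (closure Ω ∩ u ⁻¹' {0}) :=
    hKc.of_isClosed_subset (hucl.preimage_isClosed_of_isClosed isClosed_closure isClosed_singleton)
      inter_subset_left
  have hloc : ∀ z ∈ closure Ω ∩ u ⁻¹' {0}, ∃ r > 0, ∃ C : ℝ≥0,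
      ∀ s, volume {x ∈ Metric.ball z r | |u x| ≤ s} ≤ C * ENNReal.ofReal s :=
    fun z hz => exists_ball_volume_abs_le_le hUo hu (hΩU hz.1) (hnd z hz.1 hz.2)
  choose! r hr C hC using hloc
  obtain ⟨t, htZ, hcover⟩ := hZc.elim_nhds_subcover (fun z => Metric.ball z (r z))
    fun z hz => Metric.ball_mem_nhds z (hr z hz)
  obtain ⟨δ, hδ, hδu⟩ :=
    (hKc.diff (isOpen_biUnion fun z _ => Metric.isOpen_ball)).exists_pos_forall_le_abs
    (hucl.mono sdiff_subset) fun x hx hx0 => hx.2 (hcover ⟨hx.1, hx0⟩)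
  refine ⟨∑ z ∈ t, C z, δ / 2, half_pos hδ, fun s hs => ?_⟩
  have hsub : {x ∈ Ω | |u x| ≤ s} ⊆ ⋃ z ∈ t, {x ∈ Metric.ball z (r z) | |u x| ≤ s} := by
    intro x ⟨hxΩ, hxs⟩
    by_contra hx
    refine (hδu x ⟨subset_closure hxΩ, fun hxb => hx ?_⟩).not_gt
      (hxs.trans_lt (hs.trans_lt (half_lt_self hδ)))
    obtain ⟨z, hz, hxz⟩ := mem_iUnion₂.1 hxb
    exact mem_iUnion₂.2 ⟨z, hz, hxz, hxs⟩
  calc volume {x ∈ Ω | |u x| ≤ s}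
      ≤ ∑ z ∈ t, volume {x ∈ Metric.ball z (r z) | |u x| ≤ s} :=
        (measure_mono hsub).trans (measure_biUnion_finset_le t _)
    _ ≤ ∑ z ∈ t, C z * ENNReal.ofReal s := Finset.sum_le_sum fun z hz => hC z (htZ z hz) s
    _ = (∑ z ∈ t, C z : ℝ≥0) * ENNReal.ofReal s := by push_cast; rw [Finset.sum_mul]

lemma setLIntegral_abs_rpow_le {X : Type*} [MeasurableSpace X] {μ : Measure X} {f : X → ℝ}
    {A : Set X} {a p : ℝ} (ha : 0 < a) (hp : p ≤ 0) (hA : ∀ x ∈ A, a ≤ |f x|) :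
    ∫⁻ x in A, ENNReal.ofReal (|f x| ^ p) ∂μ ≤ ENNReal.ofReal (a ^ p) * μ A :=
  (setLIntegral_mono measurable_const fun x hx =>
    ENNReal.ofReal_le_ofReal (Real.rpow_le_rpow_of_nonpos ha (hA x hx) hp)).trans_eq
    (setLIntegral_const _ _)

lemma setLIntegral_dyadicShell_abs_rpow_le {X : Type*} [MeasurableSpace X] {μ : Measure X}
    {f : X → ℝ} {p : ℝ} (hp0 : p ≤ 0) {C : ℝ≥0} {δ : ℝ} (hδ : 0 < δ)
    (h : ∀ s ≤ δ, μ {x | |f x| ≤ s} ≤ C * ENNReal.ofReal s) (n : ℕ) :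
    ∫⁻ x in {x | δ * (1 / 2) ^ (n + 1) < |f x| ∧ |f x| ≤ δ * (1 / 2) ^ n},
        ENNReal.ofReal (|f x| ^ p) ∂μ ≤
      C * ENNReal.ofReal (δ ^ (p + 1) * (1 / 2) ^ p) * ENNReal.ofReal ((1 / 2) ^ (p + 1)) ^ n := by
  have hdyadic : (δ * (1 / 2) ^ (n + 1)) ^ p * (δ * (1 / 2) ^ n) =
      δ ^ (p + 1) * (1 / 2) ^ p * ((1 / 2) ^ (p + 1)) ^ n := by
    rw [pow_succ, Real.mul_rpow hδ.le (by positivity), Real.mul_rpow (by positivity) (by norm_num),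
      ← Real.rpow_pow_comm (by norm_num), Real.rpow_add_one hδ.ne',
      Real.rpow_add_one (by norm_num : (1 / 2 : ℝ) ≠ 0), mul_pow]
    ring
  calc _ ≤ ENNReal.ofReal ((δ * (1 / 2) ^ (n + 1)) ^ p) *
          μ {x | δ * (1 / 2) ^ (n + 1) < |f x| ∧ |f x| ≤ δ * (1 / 2) ^ n} :=
        setLIntegral_abs_rpow_le (by positivity) hp0 fun x hx => hx.1.le
    _ ≤ ENNReal.ofReal ((δ * (1 / 2) ^ (n + 1)) ^ p) * (C * ENNReal.ofReal (δ * (1 / 2) ^ n)) := by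
        gcongr
        exact (measure_mono fun x hx => hx.2).trans
          (h _ (mul_le_of_le_one_right hδ.le (pow_le_one₀ (by norm_num) (by norm_num))))
    _ = _ := by
        rw [mul_left_comm, ← ENNReal.ofReal_mul (by positivity), hdyadic,
          ENNReal.ofReal_mul (by positivity), ENNReal.ofReal_pow (by positivity), mul_assoc]

lemma integrable_abs_rpow_of_measure_abs_le_le {X : Type*} [MeasurableSpace X]
    {μ : Measure X} [IsFiniteMeasure μ] {f : X → ℝ} (hf : AEMeasurable f μ) {p : ℝ}
    (hp1 : -1 < p) (hp0 : p < 0) {C : ℝ≥0} {δ : ℝ} (hδ : 0 < δ)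
    (h : ∀ s ≤ δ, μ {x | |f x| ≤ s} ≤ C * ENNReal.ofReal s) :
    Integrable (fun x => |f x| ^ p) μ := by
  refine ⟨(hf.abs.pow_const p).aestronglyMeasurable, ?_⟩
  rw [hasFiniteIntegral_iff_ofReal (ae_of_all _ fun x => by positivity)]
  set A : ℕ → Set X := fun n => {x | δ * (1 / 2) ^ (n + 1) < |f x| ∧ |f x| ≤ δ * (1 / 2) ^ n}
  have hcover : univ ⊆ {x | δ ≤ |f x|} ∪ ({x | f x = 0} ∪ ⋃ n, A n) := by
    intro x _
    rcases le_or_gt δ |f x| with hδx | hxδ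
    · exact Or.inl hδx
    rcases eq_or_ne (f x) 0 with h0 | h0
    · exact Or.inr (Or.inl h0)
    obtain ⟨n, hn⟩ := exists_nat_pow_near_of_lt_one (div_pos (abs_pos.2 h0) hδ)
      ((div_le_one hδ).2 hxδ.le) one_half_pos one_half_lt_one
    refine Or.inr (Or.inr (mem_iUnion.2 ⟨n, ?_, ?_⟩))
    · rw [lt_div_iff₀ hδ] at hn; linarith [hn.1]
    · rw [div_le_iff₀ hδ] at hn; linarith [hn.2]
  have hzero : ∫⁻ x in {x | f x = 0}, ENNReal.ofReal (|f x| ^ p) ∂μ = 0 :=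
    nonpos_iff_eq_zero.1 <| (setLIntegral_mono measurable_const fun x (hx : f x = 0) => by
      simp [hx, Real.zero_rpow hp0.ne]).trans_eq lintegral_zero
  set K := C * ENNReal.ofReal (δ ^ (p + 1) * (1 / 2) ^ p)
  set ρ := ENNReal.ofReal ((1 / 2) ^ (p + 1))
  have hρ : ρ < 1 :=
    ENNReal.ofReal_lt_one.2 (Real.rpow_lt_one (by norm_num) (by norm_num) (by linarith))
  calc ∫⁻ x, ENNReal.ofReal (|f x| ^ p) ∂μ
      ≤ ∫⁻ x in {x | δ ≤ |f x|} ∪ ({x | f x = 0} ∪ ⋃ n, A n), ENNReal.ofReal (|f x| ^ p) ∂μ :=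
        setLIntegral_univ (μ := μ) _ ▸ lintegral_mono_set hcover
    _ ≤ ENNReal.ofReal (δ ^ p) * μ {x | δ ≤ |f x|} + (0 + ∑' n, K * ρ ^ n) := by
        refine (lintegral_union_le _ _ _).trans (add_le_add ?_ ((lintegral_union_le _ _ _).trans
          (add_le_add hzero.le ((lintegral_iUnion_le _ _).trans (ENNReal.tsum_le_tsum
            (setLIntegral_dyadicShell_abs_rpow_le hp0.le hδ h))))))
        exact setLIntegral_abs_rpow_le hδ hp0.le fun x hx => hx
    _ < ⊤ := by
        rw [zero_add, ENNReal.tsum_mul_left]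
        exact ENNReal.add_lt_top.2 ⟨ENNReal.mul_lt_top ENNReal.ofReal_lt_top (measure_lt_top _ _),
          ENNReal.mul_lt_top (ENNReal.mul_lt_top ENNReal.coe_lt_top ENNReal.ofReal_lt_top)
            (tsum_geometric_lt_top.2 hρ)⟩

lemma hasDerivAt_abs_rpow_mul_self (p : ℝ) {a : ℝ} (ha : a ≠ 0) :
    HasDerivAt (fun t => |t| ^ p * t) ((p + 1) * |a| ^ p) a := by
  refine (((hasDerivAt_abs ha).rpow_const (Or.inl (abs_ne_zero.2 ha))).mul
    (hasDerivAt_id a)).congr_deriv ?_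
  rw [id_eq, mul_one, Real.rpow_sub_one (abs_ne_zero.2 ha)]
  field_simp
  linear_combination p * sign_mul_self a

lemma abs_rpow_mul_self_sub_le_of_abs_le {p : ℝ} (hp1 : -1 < p) (hp0 : p ≤ 0) {a h : ℝ}
    (ha : a ≠ 0) (hh : |h| ≤ |a| / 2) :
    |(|a + h| ^ p * (a + h)) - |a| ^ p * a| ≤ (|a| / 2) ^ p * |h| := by
  have hfar : ∀ ξ ∈ segment ℝ a (a + h), |a| / 2 ≤ |ξ| := fun ξ hξ => by
    have := abs_sub_left_of_mem_uIcc (segment_eq_uIcc a (a + h) ▸ hξ)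
    rw [add_sub_cancel_left] at this
    linarith [abs_sub_abs_le_abs_sub a ξ, abs_sub_comm a ξ]
  have ha2 : 0 < |a| / 2 := half_pos (abs_pos.2 ha)
  have hderiv : ∀ ξ ∈ segment ℝ a (a + h), HasDerivWithinAt (fun t => |t| ^ p * t)
      ((p + 1) * |ξ| ^ p) (segment ℝ a (a + h)) ξ := fun ξ hξ =>
    (hasDerivAt_abs_rpow_mul_self p
      (abs_pos.1 (ha2.trans_le (hfar ξ hξ)))).hasDerivWithinAt
  have hbound : ∀ ξ ∈ segment ℝ a (a + h), ‖(p + 1) * |ξ| ^ p‖ ≤ (|a| / 2) ^ p := fun ξ hξ => by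
    rw [Real.norm_eq_abs, abs_of_nonneg (mul_nonneg (by linarith) (by positivity))]
    calc (p + 1) * |ξ| ^ p ≤ 1 * (|a| / 2) ^ p :=
          mul_le_mul (by linarith) (Real.rpow_le_rpow_of_nonpos ha2 (hfar ξ hξ) hp0)
            (by positivity) zero_le_one
      _ = (|a| / 2) ^ p := one_mul _
  simpa [Real.norm_eq_abs] using Convex.norm_image_sub_le_of_norm_hasDerivWithin_le hderiv hbound
    (convex_segment a (a + h)) (left_mem_segment ℝ a (a + h)) (right_mem_segment ℝ a (a + h))

lemma abs_rpow_mul_self_sub_le_of_le_abs {p : ℝ} (hp1 : -1 < p) (hp0 : p ≤ 0) {a h : ℝ}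
    (hh0 : h ≠ 0) (hh : |a| / 2 ≤ |h|) :
    |(|a + h| ^ p * (a + h)) - |a| ^ p * a| ≤ 6 * |h| ^ p * |h| := by
  have hpow : ∀ x : ℝ, |x| ≤ 3 * |h| → |(|x| ^ p * x)| ≤ (3 * |h|) ^ (p + 1) := fun x hx => by
    rcases eq_or_ne x 0 with rfl | hx0
    · simpa using by positivity
    rw [abs_mul, abs_of_nonneg (by positivity), ← Real.rpow_add_one (abs_ne_zero.2 hx0)]
    exact Real.rpow_le_rpow (abs_nonneg x) hx (by linarith)
  have h3 : (3 : ℝ) ^ (p + 1) ≤ 3 :=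
    (Real.rpow_le_rpow_of_exponent_le (by norm_num) (by linarith)).trans_eq (Real.rpow_one 3)
  calc |(|a + h| ^ p * (a + h)) - |a| ^ p * a|
      ≤ |(|a + h| ^ p * (a + h))| + |(|a| ^ p * a)| := abs_sub _ _
    _ ≤ (3 * |h|) ^ (p + 1) + (3 * |h|) ^ (p + 1) :=
        add_le_add (hpow _ (by linarith [abs_add_le a h])) (hpow _ (by linarith [abs_nonneg h]))
    _ = 2 * 3 ^ (p + 1) * (|h| ^ p * |h|) := by
        rw [Real.mul_rpow (by norm_num) (abs_nonneg h), Real.rpow_add_one (abs_ne_zero.2 hh0)]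
        ring
    _ ≤ 6 * |h| ^ p * |h| := by nlinarith [show 0 ≤ |h| ^ p * |h| by positivity]

lemma abs_rpow_mul_self_sub_le {p : ℝ} (hp1 : -1 < p) (hp0 : p ≤ 0) {a : ℝ} (ha : a ≠ 0) (h : ℝ) :
    |(|a + h| ^ p * (a + h)) - |a| ^ p * a| ≤ 6 * (|a| / 2) ^ p * |h| := by
  have ha2 : 0 < |a| / 2 := half_pos (abs_pos.2 ha)
  rcases le_or_gt |h| (|a| / 2) with hh | hh
  · refine (abs_rpow_mul_self_sub_le_of_abs_le hp1 hp0 ha hh).trans ?_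
    nlinarith [show 0 ≤ (|a| / 2) ^ p * |h| by positivity]
  · have hh0 : h ≠ 0 := abs_pos.1 (ha2.trans hh)
    refine (abs_rpow_mul_self_sub_le_of_le_abs hp1 hp0 hh0 hh.le).trans ?_
    gcongr 6 * ?_ * _
    exact Real.rpow_le_rpow_of_nonpos ha2 hh.le hp0

lemma tendsto_slope_integral_abs_rpow_mul_self {X : Type*} [MeasurableSpace X] {μ : Measure X}
    {p : ℝ} (hp1 : -1 < p) (hp0 : p ≤ 0) {u v w : X → ℝ} (hu : AEMeasurable u μ)
    (hu0 : ∀ᵐ x ∂μ, u x ≠ 0) (hint : Integrable (fun x => |u x| ^ p) μ)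
    (hv : AEMeasurable v μ) {Cv : ℝ} (hvb : ∀ᵐ x ∂μ, |v x| ≤ Cv)
    (hw : AEMeasurable w μ) {Cw : ℝ} (hwb : ∀ᵐ x ∂μ, |w x| ≤ Cw) :
    Tendsto (fun t : ℝ => (1 / t) *
        ∫ x, (|u x + t * w x| ^ p * (u x + t * w x) - |u x| ^ p * u x) * v x ∂μ)
      (nhdsWithin 0 {0}ᶜ) (nhds ((p + 1) * ∫ x, |u x| ^ p * v x * w x ∂μ)) := by
  simp only [← integral_const_mul]
  have hbound : Integrable (fun x => 6 * Cw * Cv * (|u x| / 2) ^ p) μ := by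
    simp only [fun x => Real.div_rpow (abs_nonneg (u x)) zero_le_two p]
    exact (hint.div_const _).const_mul _
  refine tendsto_integral_filter_of_dominated_convergence _ (Eventually.of_forall fun t => by
    fun_prop) ?_ hbound ?_
  · filter_upwards [self_mem_nhdsWithin] with t (ht : t ≠ 0)
    filter_upwards [hu0, hvb, hwb] with x hux hvx hwx
    have hdiff := abs_rpow_mul_self_sub_le hp1 hp0 hux (t * w x)
    rw [abs_mul] at hdiff
    rw [norm_mul, norm_mul, Real.norm_eq_abs, Real.norm_eq_abs, Real.norm_eq_abs, abs_div,
      abs_one]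
    calc 1 / |t| * (|(|u x + t * w x| ^ p * (u x + t * w x)) - |u x| ^ p * u x| * |v x|)
        ≤ 1 / |t| * (6 * (|u x| / 2) ^ p * (|t| * Cw) * Cv) := by
          have hCw : 0 ≤ Cw := (abs_nonneg _).trans hwx
          gcongr
          exact hdiff.trans (by gcongr)
      _ = 6 * Cw * Cv * (|u x| / 2) ^ p := by
          field_simp [abs_ne_zero.2 ht]
  · filter_upwards [hu0] with x hux
    have hderiv : HasDerivAt (fun t => |u x + t * w x| ^ p * (u x + t * w x))
        ((p + 1) * |u x| ^ p * w x) 0 :=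
      (hasDerivAt_abs_rpow_mul_self p hux).comp_of_eq 0
        (((hasDerivAt_mul_const (w x)).const_add (u x))) (by simp)
    rw [show (p + 1) * (|u x| ^ p * v x * w x) = (p + 1) * |u x| ^ p * w x * v x by ring]
    refine ((hasDerivAt_iff_tendsto_slope.1 hderiv).mul_const (v x)).congr' ?_
    filter_upwards with t
    simp [slope_fun_def_field, div_eq_inv_mul, mul_assoc]

lemma ae_ne_zero_and_integrableOn_abs_rpow {N : ℕ} {Ω U : Set (EuclideanSpace ℝ (Fin N))}
    (hΩo : IsOpen Ω) (hΩb : Bornology.IsBounded Ω) (hUo : IsOpen U) (hΩU : closure Ω ⊆ U)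
    {u : EuclideanSpace ℝ (Fin N) → ℝ} (hu : ContDiffOn ℝ 1 u U)
    (hnd : ∀ x ∈ closure Ω, u x = 0 → gradient u x ≠ 0) {p : ℝ} (hp1 : -1 < p) (hp0 : p < 0) :
    (∀ᵐ x ∂volume.restrict Ω, u x ≠ 0) ∧ IntegrableOn (fun x => |u x| ^ p) Ω := by
  obtain ⟨C, δ, hδ, hC⟩ := exists_volume_abs_le_le hΩb hUo hΩU hu hnd
  have : IsFiniteMeasure (volume.restrict Ω) := isFiniteMeasure_restrict.2 hΩb.measure_lt_top.ne
  have hCΩ : ∀ s ≤ δ, volume.restrict Ω {x | |u x| ≤ s} ≤ C * ENNReal.ofReal s := fun s hs => by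
    rw [Measure.restrict_apply' hΩo.measurableSet, inter_comm]
    exact hC s hs
  refine ⟨measure_mono_null (fun x (hx : ¬u x ≠ 0) => show |u x| ≤ 0 by simp [not_not.1 hx])
    (nonpos_iff_eq_zero.1 ((hCΩ 0 hδ.le).trans_eq (by simp))), ?_⟩
  exact integrable_abs_rpow_of_measure_abs_le_le
    ((hu.continuousOn.mono (subset_closure.trans hΩU)).aemeasurable hΩo.measurableSet)
    hp1 hp0 hδ hCΩ

/-- Second directional derivative of the map `u ↦ (1/q)∫|u|^q`: for `u ∈ C¹(U)`
with nondegenerate zeros on `closure Ω` and bounded measurable `v, w`, the difference quotient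
`(1/t)∫_Ω (|u+tw|^{q-2}(u+tw) - |u|^{q-2}u) v dx` converges as `t → 0` to
`(q-1)∫_Ω |u|^{q-2} v w dx`, the latter integral being absolutely convergent. -/
theorem statement10 {N : ℕ} (Ω U : Set (EuclideanSpace ℝ (Fin N)))
    (hΩo : IsOpen Ω) (hΩb : Bornology.IsBounded Ω)
    (hUo : IsOpen U) (hΩU : closure Ω ⊆ U)
    (q : ℝ) (hq1 : 1 < q) (hq2 : q < 2)
    (u : EuclideanSpace ℝ (Fin N) → ℝ) (hu : ContDiffOn ℝ 1 u U)
    (hnd : ∀ x ∈ closure Ω, u x = 0 → gradient u x ≠ 0)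
    (v w : EuclideanSpace ℝ (Fin N) → ℝ)
    (hv : Measurable v) (hvb : ∃ C : ℝ, ∀ x ∈ Ω, |v x| ≤ C)
    (hw : Measurable w) (hwb : ∃ C : ℝ, ∀ x ∈ Ω, |w x| ≤ C) :
    IntegrableOn (fun x => |u x| ^ (q - 2) * v x * w x) Ω ∧
    Tendsto (fun t : ℝ => (1 / t) *
        ∫ x in Ω, (|u x + t * w x| ^ (q - 2) * (u x + t * w x) - |u x| ^ (q - 2) * u x) * v x)
      (nhdsWithin 0 {0}ᶜ)
      (nhds ((q - 1) * ∫ x in Ω, |u x| ^ (q - 2) * v x * w x)) := by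
  obtain ⟨hu0, hint⟩ := ae_ne_zero_and_integrableOn_abs_rpow hΩo hΩb hUo hΩU hu hnd
    (p := q - 2) (by linarith) (by linarith)
  obtain ⟨Cv, hCv⟩ := hvb
  obtain ⟨Cw, hCw⟩ := hwb
  have hvb' := ae_restrict_of_forall_mem (μ := volume) hΩo.measurableSet hCv
  have hwb' := ae_restrict_of_forall_mem (μ := volume) hΩo.measurableSet hCw
  have hvw : ∀ᵐ x ∂volume.restrict Ω, ‖v x * w x‖ ≤ Cv * Cw := by
    filter_upwards [hvb', hwb'] with x hvx hwx
    rw [Real.norm_eq_abs, abs_mul]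
    exact mul_le_mul hvx hwx (abs_nonneg _) ((abs_nonneg _).trans hvx)
  refine ⟨by simpa only [IntegrableOn, mul_assoc, Pi.mul_apply] using
    hint.mul_bdd (hv.mul hw).aestronglyMeasurable hvw, ?_⟩
  have hu_ae : AEMeasurable u (volume.restrict Ω) :=
    (hu.continuousOn.mono (subset_closure.trans hΩU)).aemeasurable hΩo.measurableSet
  simpa only [show q - 2 + 1 = q - 1 by ring] using
    tendsto_slope_integral_abs_rpow_mul_self (by linarith) (by linarith) hu_ae hu0 hint
      hv.aemeasurable hvb' hw.aemeasurable hwb'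
end

section
/- Let N ≥ 2 be an integer and 1 < q < 2. Let u ∈ C¹([0,1]) be twice differentiable on (0,1] and satisfy u″(r) + ((N−1)/r) u′(r) + |u(r)|^{q−2}u(r) = 0 for every r ∈ (0,1], together with u′(0) = 0 and u′(1) = 0, and suppose u is not identically zero. Then u(0) ≠ 0, u(1) ≠ 0, and u has only finitely many zeros in (0,1). -/
open Set Filter Topology

/-!
Along a solution the energy `E = u'² / 2 + |u|^q / q` satisfies `E' = -((N - 1) / r) u'² ≤ 0`.
On `[a, 1]` with `a > 0` this derivative is also `≥ -(2 (N - 1) / a) E`, so `e^{K r} E` is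
nondecreasing there: a zero of `E` anywhere forces `E(1) = 0`, and then `E = 0` on `(0, 1]`,
i.e. `u ≡ 0`. Hence `E` never vanishes for a nontrivial solution. Since `u' = 0` at both
endpoints, `u` cannot vanish there; and at an accumulation point of zeros both `u` and `u'`
would vanish, so the zeros cannot accumulate in the compact interval `[0, 1]`.
-/

theorem HasDerivWithinAt.eq_zero_of_accPt_zeros {𝕜 F : Type*} [NontriviallyNormedField 𝕜]
    [NormedAddCommGroup F] [NormedSpace 𝕜 F] {f : 𝕜 → F} {f' : F} {s : Set 𝕜} {x : 𝕜}
    (hf : HasDerivWithinAt f f' s x) (hx : AccPt x (𝓟 {y ∈ s | f y = 0})) :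
    f x = 0 ∧ f' = 0 := by
  have hzeros : ∃ᶠ y in 𝓝[s \ {x}] x, f y = 0 :=
    frequently_nhdsWithin_iff.mpr <|
      (accPt_iff_frequently.mp hx).mono fun _ ⟨hne, hs, hy⟩ => ⟨hy, hs, hne⟩
  have hfx : f x = 0 := tendsto_nhds_unique_of_frequently_eq
    (hf.continuousWithinAt.mono sdiff_subset) tendsto_const_nhds hzeros
  refine ⟨hfx, tendsto_nhds_unique_of_frequently_eq (hasDerivWithinAt_iff_tendsto_slope.mp hf)
    tendsto_const_nhds (hzeros.mono fun y hy => ?_)⟩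
  simp [slope_def_module, hy, hfx]

theorem le_exp_mul_mul_of_neg_mul_le_deriv {f f' : ℝ → ℝ} {a b K : ℝ} (hab : a ≤ b)
    (hf : ContinuousOn f (Icc a b)) (hderiv : ∀ x ∈ Ioo a b, HasDerivAt f (f' x) x)
    (hbound : ∀ x ∈ Ioo a b, -(K * f x) ≤ f' x) :
    f a ≤ Real.exp (K * (b - a)) * f b := by
  have hmono : MonotoneOn (fun x => Real.exp (K * x) * f x) (Icc a b) := by
    refine monotoneOn_of_hasDerivWithinAt_nonneg (convex_Icc a b)
      (((continuous_const.mul continuous_id).rexp).continuousOn.mul hf)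
      (f' := fun x => Real.exp (K * x) * (K * f x + f' x)) (fun x hx => ?_) (fun x hx => ?_)
    · rw [interior_Icc] at hx ⊢
      have hexp : HasDerivAt (fun x => Real.exp (K * x)) (Real.exp (K * x) * K) x := by
        simpa using ((hasDerivAt_id x).const_mul K).exp
      exact ((hexp.mul (hderiv x hx)).congr_deriv (by ring)).hasDerivWithinAt
    · rw [interior_Icc] at hx
      have : 0 ≤ K * f x + f' x := by linarith [hbound x hx]
      positivity
  have h := hmono (left_mem_Icc.2 hab) (right_mem_Icc.2 hab) hab
  calc f a = Real.exp (-(K * a)) * (Real.exp (K * a) * f a) := by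
        rw [← mul_assoc, ← Real.exp_add, neg_add_cancel, Real.exp_zero, one_mul]
    _ ≤ Real.exp (-(K * a)) * (Real.exp (K * b) * f b) := by gcongr
    _ = Real.exp (K * (b - a)) * f b := by
        rw [← mul_assoc, ← Real.exp_add]; ring_nf

noncomputable def radialEnergy (q : ℝ) (u u' : ℝ → ℝ) (r : ℝ) : ℝ :=
  u' r ^ 2 / 2 + |u r| ^ q / q

section RadialEnergy

variable {q : ℝ} {u u' : ℝ → ℝ} {r : ℝ}

theorem sq_le_two_mul_radialEnergy (hq : 0 ≤ q) : u' r ^ 2 ≤ 2 * radialEnergy q u u' r := by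
  have : 0 ≤ |u r| ^ q / q := by positivity
  rw [radialEnergy]
  linarith

theorem radialEnergy_nonneg (hq : 0 ≤ q) : 0 ≤ radialEnergy q u u' r := by
  rw [radialEnergy]
  positivity

theorem radialEnergy_eq_zero_iff (hq : 0 < q) :
    radialEnergy q u u' r = 0 ↔ u r = 0 ∧ u' r = 0 := by
  rw [radialEnergy, add_eq_zero_iff_of_nonneg (by positivity) (by positivity),
    div_eq_zero_iff, div_eq_zero_iff, Real.rpow_eq_zero (abs_nonneg _) hq.ne', abs_eq_zero]
  simp [hq.ne', and_comm]

theorem hasDerivWithinAt_radialEnergy {u'' : ℝ → ℝ} {s : Set ℝ} {a : ℝ} (hq : 1 < q)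
    (hu : HasDerivWithinAt u (u' r) s r) (hu' : HasDerivWithinAt u' (u'' r) s r)
    (hode : u'' r + a * u' r + |u r| ^ (q - 2) * u r = 0) :
    HasDerivWithinAt (radialEnergy q u u') (-(a * u' r ^ 2)) s r := by
  have hkin := (hu'.pow 2).div_const 2
  have hpot := ((hasDerivAt_abs_rpow (u r) hq).comp_hasDerivWithinAt r hu).div_const q
  refine (hkin.add hpot).congr_deriv ?_
  have hq0 : q ≠ 0 := by linarith
  simp only [Nat.cast_ofNat, pow_one, Nat.add_one_sub_one]
  field_simp
  linear_combination u' r * hode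

end RadialEnergy

/-- For the Laplacian on the unit ball of `ℝ^N`, `c = N - 1`. -/
structure IsRadialSolution (c q : ℝ) (u u' u'' : ℝ → ℝ) : Prop where
  hasDerivWithinAt : ∀ r ∈ Icc (0 : ℝ) 1, HasDerivWithinAt u (u' r) (Icc 0 1) r
  continuousOn_deriv : ContinuousOn u' (Icc 0 1)
  hasDerivWithinAt_deriv : ∀ r ∈ Ioc (0 : ℝ) 1, HasDerivWithinAt u' (u'' r) (Icc 0 1) r
  ode : ∀ r ∈ Ioc (0 : ℝ) 1, u'' r + c / r * u' r + |u r| ^ (q - 2) * u r = 0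

namespace IsRadialSolution

variable {c q : ℝ} {u u' u'' : ℝ → ℝ}

theorem continuousOn (hu : IsRadialSolution c q u u' u'') : ContinuousOn u (Icc 0 1) :=
  fun r hr => (hu.hasDerivWithinAt r hr).continuousWithinAt

theorem continuousOn_radialEnergy (hu : IsRadialSolution c q u u' u'') (hq : 0 < q) :
    ContinuousOn (radialEnergy q u u') (Icc 0 1) :=
  ((hu.continuousOn_deriv.pow 2).div_const 2).add
    ((hu.continuousOn.abs.rpow_const fun _ _ => Or.inr hq.le).div_const q)

theorem hasDerivAt_radialEnergy (hu : IsRadialSolution c q u u' u'') (hq : 1 < q) {r : ℝ}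
    (hr : r ∈ Ioo (0 : ℝ) 1) :
    HasDerivAt (radialEnergy q u u') (-(c / r * u' r ^ 2)) r :=
  (hasDerivWithinAt_radialEnergy hq (hu.hasDerivWithinAt r (Ioo_subset_Icc_self hr))
      (hu.hasDerivWithinAt_deriv r (Ioo_subset_Ioc_self hr)) (hu.ode r (Ioo_subset_Ioc_self hr))
    ).hasDerivAt (Icc_mem_nhds hr.1 hr.2)

theorem antitoneOn_radialEnergy (hu : IsRadialSolution c q u u' u'') (hq : 1 < q) (hc : 0 ≤ c) :
    AntitoneOn (radialEnergy q u u') (Icc 0 1) := by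
  refine antitoneOn_of_hasDerivWithinAt_nonpos (convex_Icc 0 1)
    (f' := fun r => -(c / r * u' r ^ 2)) (hu.continuousOn_radialEnergy (by linarith))
    (fun r hr => ?_) (fun r hr => ?_)
  · rw [interior_Icc] at hr ⊢
    exact (hu.hasDerivAt_radialEnergy hq hr).hasDerivWithinAt
  · rw [interior_Icc] at hr
    exact neg_nonpos.2 (mul_nonneg (div_nonneg hc hr.1.le) (sq_nonneg _))

theorem radialEnergy_eq_zero_of_radialEnergy_one (hu : IsRadialSolution c q u u' u'')
    (hq : 1 < q) (hc : 0 ≤ c) (h1 : radialEnergy q u u' 1 = 0) {a : ℝ} (ha : a ∈ Ioc (0 : ℝ) 1) :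
    radialEnergy q u u' a = 0 := by
  have hq0 : 0 ≤ q := by linarith
  refine le_antisymm ?_ (radialEnergy_nonneg hq0)
  have hbound : ∀ r ∈ Ioo a 1, -(2 * c / a * radialEnergy q u u' r) ≤ -(c / r * u' r ^ 2) := by
    intro r hr
    refine neg_le_neg ?_
    calc c / r * u' r ^ 2 ≤ c / a * u' r ^ 2 := by gcongr; exacts [ha.1, hr.1.le]
      _ ≤ c / a * (2 * radialEnergy q u u' r) := by
        have : 0 ≤ c / a := div_nonneg hc ha.1.le
        gcongr
        exact sq_le_two_mul_radialEnergy hq0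
      _ = 2 * c / a * radialEnergy q u u' r := by ring
  have := le_exp_mul_mul_of_neg_mul_le_deriv ha.2
    ((hu.continuousOn_radialEnergy (by linarith)).mono (Icc_subset_Icc_left ha.1.le))
    (fun r hr => hu.hasDerivAt_radialEnergy hq ⟨ha.1.trans hr.1, hr.2⟩) hbound
  rwa [h1, mul_zero] at this

theorem eqOn_zero_of_radialEnergy_eq_zero (hu : IsRadialSolution c q u u' u'') (hq : 1 < q)
    (hc : 0 ≤ c) {r₀ : ℝ} (hr₀ : r₀ ∈ Icc (0 : ℝ) 1) (h : radialEnergy q u u' r₀ = 0) :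
    EqOn u 0 (Icc 0 1) := by
  have hq0 : 0 ≤ q := by linarith
  have h1 : radialEnergy q u u' 1 = 0 := le_antisymm
    (h ▸ hu.antitoneOn_radialEnergy hq hc hr₀ (right_mem_Icc.2 zero_le_one) hr₀.2)
    (radialEnergy_nonneg hq0)
  have hpos : EqOn u 0 (Ioc 0 1) := fun r hr =>
    ((radialEnergy_eq_zero_iff (by linarith)).mp
      (hu.radialEnergy_eq_zero_of_radialEnergy_one hq hc h1 hr)).1
  exact hpos.of_subset_closure hu.continuousOn continuousOn_const Ioc_subset_Icc_self
    (closure_Ioc zero_ne_one).ge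

end IsRadialSolution

theorem statement12_general (N : ℕ) (hN : 2 ≤ N) (q : ℝ) (hq1 : 1 < q)
    (u u' u'' : ℝ → ℝ)
    (hu' : ∀ r ∈ Icc (0 : ℝ) 1, HasDerivWithinAt u (u' r) (Icc 0 1) r)
    (hu'c : ContinuousOn u' (Icc 0 1))
    (hu'' : ∀ r ∈ Ioc (0 : ℝ) 1, HasDerivWithinAt u' (u'' r) (Icc 0 1) r)
    (hode : ∀ r ∈ Ioc (0 : ℝ) 1,
      u'' r + (((N : ℝ) - 1) / r) * u' r + |u r| ^ (q - 2) * u r = 0)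
    (hbc0 : u' 0 = 0) (hbc1 : u' 1 = 0)
    (hnontriv : ∃ r ∈ Icc (0 : ℝ) 1, u r ≠ 0) :
    u 0 ≠ 0 ∧ u 1 ≠ 0 ∧ {r ∈ Ioo (0 : ℝ) 1 | u r = 0}.Finite := by
  have hu : IsRadialSolution ((N : ℝ) - 1) q u u' u'' := ⟨hu', hu'c, hu'', hode⟩
  have hc : (0 : ℝ) ≤ (N : ℝ) - 1 := sub_nonneg.2 (Nat.one_le_cast.2 (by omega))
  obtain ⟨r₁, hr₁, hur₁⟩ := hnontriv
  have hE : ∀ r ∈ Icc (0 : ℝ) 1, ¬(u r = 0 ∧ u' r = 0) := fun r hr h =>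
    hur₁ (hu.eqOn_zero_of_radialEnergy_eq_zero hq1 hc hr
      ((radialEnergy_eq_zero_iff (by linarith)).mpr h) hr₁)
  refine ⟨fun h => hE 0 (left_mem_Icc.2 zero_le_one) ⟨h, hbc0⟩,
    fun h => hE 1 (right_mem_Icc.2 zero_le_one) ⟨h, hbc1⟩, ?_⟩
  by_contra hinf
  obtain ⟨x, hx, hacc⟩ := Set.Infinite.exists_accPt_of_subset_isCompact hinf isCompact_Icc
    fun r hr => Ioo_subset_Icc_self hr.1
  exact hE x hx ((hu' x hx).eq_zero_of_accPt_zeros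
    (hacc.mono (principal_mono.2 fun r hr => ⟨Ioo_subset_Icc_self hr.1, hr.2⟩)))

/-- If `u ∈ C¹([0,1])` is twice differentiable on `(0,1]`, solves the radial ODE
`u'' + ((N-1)/r)u' + |u|^{q-2}u = 0` on `(0,1]` with `u'(0) = u'(1) = 0`, and `u` is not
identically zero on `[0,1]`, then `u(0) ≠ 0`, `u(1) ≠ 0`, and `u` has only finitely many
zeros in `(0,1)`. -/
theorem statement12 (N : ℕ) (hN : 2 ≤ N) (q : ℝ) (hq1 : 1 < q) (hq2 : q < 2)
    (u u' u'' : ℝ → ℝ)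
    (hu' : ∀ r ∈ Icc (0 : ℝ) 1, HasDerivWithinAt u (u' r) (Icc 0 1) r)
    (hu'c : ContinuousOn u' (Icc 0 1))
    (hu'' : ∀ r ∈ Ioc (0 : ℝ) 1, HasDerivWithinAt u' (u'' r) (Icc 0 1) r)
    (hode : ∀ r ∈ Ioc (0 : ℝ) 1,
      u'' r + (((N : ℝ) - 1) / r) * u' r + |u r| ^ (q - 2) * u r = 0)
    (hbc0 : u' 0 = 0) (hbc1 : u' 1 = 0)
    (hnontriv : ∃ r ∈ Icc (0 : ℝ) 1, u r ≠ 0) :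
    u 0 ≠ 0 ∧ u 1 ≠ 0 ∧ {r ∈ Ioo (0 : ℝ) 1 | u r = 0}.Finite :=
  statement12_general N hN q hq1 u u' u'' hu' hu'c hu'' hode hbc0 hbc1 hnontriv
end

section
/- Let N ≥ 2 be an integer, and let u : (0,1] → ℝ be C¹ with u′ locally absolutely continuous on (0,1], satisfying u″(r) + ((N−1)/r) u′(r) + sgn(u(r)) = 0 for almost every r ∈ (0,1]. Then the function h : (0,1] → ℝ, h(r) = u′(r)²/2 + |u(r)|, is nonincreasing on (0,1]. -/
open MeasureTheory Set Filter

/-! On every `[a, b] ⊆ (0, 1]` the energy `u'²/2 + |u|` is absolutely continuous, and almost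
everywhere its derivative is `u' (u'' + sgn u) = -((N - 1) / r) u'² ≤ 0`. At a zero of `u` where
`|u|` is differentiable, its derivative vanishes because `|u|` is minimal there, matching
`sgn 0 = 0`; so no analysis of the zero set of `u` is needed. The fundamental theorem of calculus
for absolutely continuous functions then shows that the energy decreases. -/

theorem AbsolutelyContinuousOnInterval.congr {X : Type*} [PseudoMetricSpace X] {f g : ℝ → X}
    {a b : ℝ} (hf : AbsolutelyContinuousOnInterval f a b) (hfg : EqOn f g (uIcc a b)) :
    AbsolutelyContinuousOnInterval g a b := by
  refine hf.congr' (eventually_inf_principal.2 (Eventually.of_forall fun E hE => ?_))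
  exact Finset.sum_congr rfl fun i hi => by rw [hfg (hE.1 i hi).1, hfg (hE.1 i hi).2]

theorem AbsolutelyContinuousOnInterval.abs {f : ℝ → ℝ} {a b : ℝ}
    (hf : AbsolutelyContinuousOnInterval f a b) :
    AbsolutelyContinuousOnInterval (fun x => |f x|) a b :=
  squeeze_zero (fun _ => Finset.sum_nonneg fun _ _ => dist_nonneg)
    (fun _ => Finset.sum_le_sum fun _ _ => abs_abs_sub_abs_le_abs_sub _ _) hf

section IntegralOfDeriv

variable {f f' : ℝ → ℝ} {a b : ℝ}

theorem AbsolutelyContinuousOnInterval.of_sub_eq_integral (hf' : IntervalIntegrable f' volume a b)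
    (hf : ∀ x ∈ uIcc a b, f x - f a = ∫ t in a..x, f' t) :
    AbsolutelyContinuousOnInterval f a b := by
  have hac := (hf'.absolutelyContinuousOnInterval_intervalIntegral left_mem_uIcc).add
    (LipschitzWith.const (f a)).lipschitzOnWith.absolutelyContinuousOnInterval
  exact hac.congr fun x hx => by simp only [Pi.add_apply]; linarith [hf x hx]

theorem ae_hasDerivAt_of_sub_eq_integral (hf' : IntervalIntegrable f' volume a b)
    (hf : ∀ x ∈ uIcc a b, f x - f a = ∫ t in a..x, f' t) :
    ∀ᵐ x, x ∈ Ioo a b → HasDerivAt f (f' x) x := by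
  filter_upwards [hf'.ae_hasDerivAt_integral] with x hderiv hx
  have hx' : x ∈ uIcc a b := Icc_subset_uIcc (Ioo_subset_Icc_self hx)
  refine ((hderiv hx' a left_mem_uIcc).const_add (f a)).congr_of_eventuallyEq ?_
  filter_upwards [Ioo_mem_nhds hx.1 hx.2] with y hy
  linarith [hf y (Icc_subset_uIcc (Ioo_subset_Icc_self hy))]

end IntegralOfDeriv

theorem intervalIntegral.integral_eq_sub_of_hasDerivWithinAt_of_Icc_subset {f f' : ℝ → ℝ}
    {s : Set ℝ} {a b : ℝ} (hab : a ≤ b) (hs : Icc a b ⊆ s)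
    (hf : ∀ x ∈ s, HasDerivWithinAt f (f' x) s x) (hf' : ContinuousOn f' s) :
    ∫ t in a..b, f' t = f b - f a :=
  integral_eq_sub_of_hasDerivAt_of_le hab
    (fun x hx => (hf x (hs hx)).continuousWithinAt.mono hs)
    (fun x hx => (hf x (hs (Ioo_subset_Icc_self hx))).hasDerivAt
      (mem_of_superset (Icc_mem_nhds hx.1 hx.2) hs))
    ((hf'.mono (uIcc_of_le hab ▸ hs)).intervalIntegrable)

theorem AbsolutelyContinuousOnInterval.le_of_ae_deriv_nonpos {f : ℝ → ℝ} {a b : ℝ}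
    (hf : AbsolutelyContinuousOnInterval f a b) (hab : a ≤ b)
    (hderiv : ∀ᵐ x, x ∈ Ioo a b → deriv f x ≤ 0) : f b ≤ f a := by
  have hnonpos : ∫ x in Ioo a b, deriv f x ≤ 0 :=
    integral_nonpos_of_ae ((ae_restrict_iff' measurableSet_Ioo).2 hderiv)
  have h := hf.integral_deriv_eq_sub
  rw [intervalIntegral.integral_of_le hab, integral_Ioc_eq_integral_Ioo] at h
  linarith

theorem HasDerivAt.abs_of_differentiableAt {u : ℝ → ℝ} {u' x : ℝ} (hu : HasDerivAt u u' x)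
    (habs : DifferentiableAt ℝ (fun y => |u y|) x) :
    HasDerivAt (fun y => |u y|) (Real.sign (u x) * u') x := by
  rcases lt_trichotomy (u x) 0 with hneg | hzero | hpos
  · rw [Real.sign_of_neg hneg]
    exact (hasDerivAt_abs_neg hneg).comp x hu |>.congr_deriv (by ring)
  · have hmin : IsLocalMin (fun y => |u y|) x :=
      Eventually.of_forall fun y => by simp [hzero]
    rw [hzero, Real.sign_zero, zero_mul, ← hmin.hasDerivAt_eq_zero habs.hasDerivAt]
    exact habs.hasDerivAt
  · rw [Real.sign_of_pos hpos]
    exact (hasDerivAt_abs_pos hpos).comp x hu |>.congr_deriv (by ring)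

noncomputable def energy (u u' : ℝ → ℝ) (r : ℝ) : ℝ := u' r ^ 2 / 2 + |u r|

theorem hasDerivAt_energy {u u' : ℝ → ℝ} {u'' x : ℝ} (hu : HasDerivAt u (u' x) x)
    (hu' : HasDerivAt u' u'' x) (habs : DifferentiableAt ℝ (fun y => |u y|) x) :
    HasDerivAt (energy u u') (u' x * (u'' + Real.sign (u x))) x :=
  ((hu'.fun_pow 2).div_const 2).add (hu.abs_of_differentiableAt habs)
    |>.congr_deriv (by push_cast; ring)

theorem energy_le_of_damped_ode {u u' u'' k : ℝ → ℝ} {a b : ℝ} (hab : a ≤ b)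
    (hu'_int : IntervalIntegrable u' volume a b) (hu''_int : IntervalIntegrable u'' volume a b)
    (hu : ∀ x ∈ uIcc a b, u x - u a = ∫ t in a..x, u' t)
    (hu' : ∀ x ∈ uIcc a b, u' x - u' a = ∫ t in a..x, u'' t)
    (hk : ∀ r ∈ Ioo a b, 0 ≤ k r)
    (hode : ∀ᵐ r, r ∈ Ioo a b → u'' r + k r * u' r + Real.sign (u r) = 0) :
    energy u u' b ≤ energy u u' a := by
  have hu'_ac := AbsolutelyContinuousOnInterval.of_sub_eq_integral hu''_int hu'
  have habs_ac := (AbsolutelyContinuousOnInterval.of_sub_eq_integral hu'_int hu).abs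
  have henergy_ac : AbsolutelyContinuousOnInterval (energy u u') a b :=
    (((hu'_ac.fun_mul hu'_ac).const_mul (1 / 2)).add habs_ac).congr fun x _ => by
      simp only [Pi.add_apply, energy]; ring
  refine henergy_ac.le_of_ae_deriv_nonpos hab ?_
  filter_upwards [ae_hasDerivAt_of_sub_eq_integral hu'_int hu,
    ae_hasDerivAt_of_sub_eq_integral hu''_int hu', habs_ac.ae_differentiableAt, hode]
    with x hux hu'x habs_x hode_x hx
  have hx' : x ∈ uIcc a b := Icc_subset_uIcc (Ioo_subset_Icc_self hx)
  rw [(hasDerivAt_energy (hux hx) (hu'x hx) (habs_x hx')).deriv,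
    show u'' x + Real.sign (u x) = -(k x * u' x) by linarith [hode_x hx]]
  nlinarith [mul_nonneg (hk x hx) (sq_nonneg (u' x))]

/-- For a `C¹` function `u` on `(0,1]` whose derivative `u'` is locally
absolutely continuous (with a.e. derivative `u''`, locally integrable up to `1`) and which
satisfies `u'' + ((N-1)/r)u' + sgn(u) = 0` a.e. on `(0,1]`, the energy
`h(r) = u'(r)²/2 + |u(r)|` is nonincreasing on `(0,1]`. -/
theorem statement13 (N : ℕ) (hN : 2 ≤ N) (u u' u'' : ℝ → ℝ)
    (hu' : ∀ r ∈ Ioc (0 : ℝ) 1, HasDerivWithinAt u (u' r) (Ioc 0 1) r)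
    (hu'c : ContinuousOn u' (Ioc 0 1))
    (hu''int : ∀ a : ℝ, 0 < a → IntegrableOn u'' (Icc a 1))
    (hAC : ∀ a b : ℝ, 0 < a → a ≤ b → b ≤ 1 → u' b - u' a = ∫ t in a..b, u'' t)
    (hode : ∀ᵐ r ∂(volume.restrict (Ioc (0 : ℝ) 1)),
      u'' r + (((N : ℝ) - 1) / r) * u' r + Real.sign (u r) = 0) :
    AntitoneOn (fun r => u' r ^ 2 / 2 + |u r|) (Ioc (0 : ℝ) 1) := by
  intro a ha b hb hab
  have hsub : uIcc a b ⊆ Ioc 0 1 := by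
    rw [uIcc_of_le hab]
    exact fun x hx => ⟨ha.1.trans_le hx.1, hx.2.trans hb.2⟩
  have hN1 : (0 : ℝ) ≤ N - 1 := by
    have : (2 : ℝ) ≤ N := by exact_mod_cast hN
    linarith
  refine energy_le_of_damped_ode (k := fun r => (N - 1) / r) hab
    (hu'c.mono hsub).intervalIntegrable
    ((hu''int a ha.1).mono_set (uIcc_of_le hab ▸ Icc_subset_Icc_right hb.2)).intervalIntegrable
    (fun x hx => ?_) (fun x hx => ?_) (fun r hr => div_nonneg hN1 (ha.1.trans hr.1).le) ?_
  · rw [uIcc_of_le hab] at hx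
    exact (intervalIntegral.integral_eq_sub_of_hasDerivWithinAt_of_Icc_subset hx.1
      ((Icc_subset_Icc_right hx.2).trans (uIcc_of_le hab ▸ hsub)) hu' hu'c).symm
  · rw [uIcc_of_le hab] at hx
    exact hAC a x ha.1 hx.1 (hx.2.trans hb.2)
  · filter_upwards [(ae_restrict_iff' measurableSet_Ioc).1 hode] with r hode_r hr
    exact hode_r (hsub (Icc_subset_uIcc (Ioo_subset_Icc_self hr)))
end

section
/- For every integer N ≥ 3, the inequality ( (2^{−2/N}−1)N + 2^{1−2/N} ) / ( (N−2)(N+2) ) < (N−2) / ( N²(N−1) ) holds. -/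
/-!
With `E = 2^(-2/N) = exp (-2 log 2 / N)`, clearing denominators turns the claim into
`E N² (N + 2)(N - 1) < N³ (N - 1) + (N - 2)² (N + 2)`. The bound `exp (-u) ≤ 1 - u + u²/2`
for `u ≥ 0` replaces `E N²` by `N² - 2 N log 2 + 2 (log 2)²`, and the resulting quartic
inequality, expanded in powers of `N - 3`, has all coefficients positive once
`2/3 ≤ log 2 ≤ 1`.
-/

open Real

theorem Real.exp_neg_le_one_sub_add_sq_div_two {u : ℝ} (hu : 0 ≤ u) :
    exp (-u) ≤ 1 - u + u ^ 2 / 2 := by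
  have hpos : 0 < 1 + u + u ^ 2 / 2 := by positivity
  calc exp (-u) = (exp u)⁻¹ := exp_neg u
    _ ≤ (1 + u + u ^ 2 / 2)⁻¹ := inv_anti₀ hpos (quadratic_le_exp_of_nonneg hu)
    _ ≤ 1 - u + u ^ 2 / 2 := by
      -- `(1 - u + u²/2)(1 + u + u²/2) = 1 + u⁴/4`
      rw [inv_le_iff_one_le_mul₀ hpos]
      nlinarith [pow_nonneg hu 4]

theorem Real.rpow_neg_le_one_sub_add_sq_div_two {b t : ℝ} (hb : 1 ≤ b) (ht : 0 ≤ t) :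
    b ^ (-t) ≤ 1 - t * log b + (t * log b) ^ 2 / 2 := by
  rw [rpow_def_of_pos (by linarith), mul_neg, mul_comm]
  exact exp_neg_le_one_sub_add_sq_div_two (mul_nonneg ht (log_nonneg hb))

theorem quartic_lt_of_three_le {L x : ℝ} (hL₀ : 2 / 3 ≤ L) (hL₁ : L ≤ 1) (hx : 3 ≤ x) :
    (x ^ 2 - 2 * L * x + 2 * L ^ 2) * ((x + 2) * (x - 1))
      < x ^ 3 * (x - 1) + (x - 2) ^ 2 * (x + 2) := by
  obtain ⟨y, hy, rfl⟩ : ∃ y, 0 ≤ y ∧ x = y + 3 := ⟨x - 3, by linarith, by ring⟩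
  have c₃ : 0 ≤ (2 * L - 1) * y ^ 3 := by
    have : 0 ≤ 2 * L - 1 := by linarith
    positivity
  have c₂ : 0 ≤ (20 * L - 9 - 2 * L ^ 2) * y ^ 2 := by
    have : 0 ≤ 20 * L - 9 - 2 * L ^ 2 := by nlinarith
    positivity
  have c₁ : 0 ≤ (62 * L - 31 - 14 * L ^ 2) * y := by
    have : 0 ≤ 62 * L - 31 - 14 * L ^ 2 := by nlinarith
    positivity
  have c₀ : 0 < 60 * L - 31 - 20 * L ^ 2 := by nlinarith
  linear_combination c₃ + c₂ + c₁ + c₀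

/-- For every integer `N ≥ 3`,
`((2^{-2/N} - 1)N + 2^{1-2/N}) / ((N-2)(N+2)) < (N-2) / (N²(N-1))`. -/
theorem statement16 (N : ℕ) (hN : 3 ≤ N) :
    (((2 : ℝ) ^ (-(2 / (N : ℝ))) - 1) * N + (2 : ℝ) ^ (1 - 2 / (N : ℝ)))
      / (((N : ℝ) - 2) * ((N : ℝ) + 2))
    < ((N : ℝ) - 2) / ((N : ℝ) ^ 2 * ((N : ℝ) - 1)) := by
  have hx : (3 : ℝ) ≤ N := by exact_mod_cast hN
  set x : ℝ := (N : ℝ)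
  set E : ℝ := (2 : ℝ) ^ (-(2 / x))
  have hE₂ : (2 : ℝ) ^ (1 - 2 / x) = 2 * E := by
    rw [sub_eq_add_neg, rpow_add two_pos, rpow_one]
  have hE : E * x ^ 2 ≤ x ^ 2 - 2 * log 2 * x + 2 * log 2 ^ 2 := by
    have h := Real.rpow_neg_le_one_sub_add_sq_div_two one_le_two (t := 2 / x) (by positivity)
    have hx₀ : x ≠ 0 := by positivity
    calc E * x ^ 2 ≤ (1 - 2 / x * log 2 + (2 / x * log 2) ^ 2 / 2) * x ^ 2 := by gcongr
      _ = x ^ 2 - 2 * log 2 * x + 2 * log 2 ^ 2 := by field_simp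
  have hpoly := quartic_lt_of_three_le (L := log 2)
    (by linarith [log_two_gt_d9]) (by linarith [log_two_lt_d9]) hx
  rw [hE₂, div_lt_div_iff₀ (by nlinarith) (by nlinarith)]
  have hprod : 0 ≤ (x + 2) * (x - 1) := by nlinarith
  linear_combination mul_le_mul_of_nonneg_right hE hprod + hpoly
end

section
/- Let Ω ⊂ ℝ^N be a bounded open set and let u : Ω → ℝ be measurable. Then |λ({x ∈ Ω : u(x) > 0}) − λ({x ∈ Ω : u(x) < 0})| ≤ λ({x ∈ Ω : u(x) = 0}) holds if and only if for every c > 0 one has ∫_Ω sgn(u(x)−c) dx ≤ 0 ≤ ∫_Ω sgn(u(x)+c) dx. -/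
/-!
Since `sgn (u - c)` is `1` on `{u > c}` and `-1` on `{u < c}`, its integral is `λ{u > c} - λ{u < c}`.
Letting `c ↓ 0`, the first condition for all `c > 0` is equivalent to
`λ{u > 0} ≤ λ{u ≤ 0} = λ{u < 0} + λ{u = 0}`, and the second condition is the first one for `-u`.
These two inequalities are the two halves of the absolute value inequality.
-/

open MeasureTheory Set Filter Topology

namespace MeasureTheory

variable {α : Type*} [MeasurableSpace α] {μ : Measure α} [IsFiniteMeasure μ] {u : α → ℝ}

lemma integral_sign_sub (hu : Measurable u) (c : ℝ) :
    ∫ x, Real.sign (u x - c) ∂μ = μ.real {x | c < u x} - μ.real {x | u x < c} := by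
  have hsign : ∀ x, Real.sign (u x - c)
      = {x | c < u x}.indicator 1 x - {x | u x < c}.indicator 1 x := by
    intro x
    rcases lt_trichotomy (u x) c with h | rfl | h
    · simp [Real.sign_of_neg (sub_neg.mpr h), h, h.not_gt]
    · simp
    · simp [Real.sign_of_pos (sub_pos.mpr h), h, h.not_gt]
  have hgt : MeasurableSet {x | c < u x} := measurableSet_lt measurable_const hu
  have hlt : MeasurableSet {x | u x < c} := measurableSet_lt hu measurable_const
  simp only [hsign]
  rw [integral_sub ((integrable_const 1).indicator hgt) ((integrable_const 1).indicator hlt),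
    integral_indicator_one hgt, integral_indicator_one hlt]

lemma measureReal_setOf_le_zero (hu : Measurable u) :
    μ.real {x | u x ≤ 0} = μ.real {x | u x < 0} + μ.real {x | u x = 0} := by
  rw [← measureReal_union _ (measurableSet_eq_fun hu measurable_const)]
  · simp only [le_iff_lt_or_eq, ofPred_or]
  · exact disjoint_left.mpr fun x hlt heq => hlt.ne heq

lemma tendsto_measureReal_setOf_le_nhdsGT (hu : Measurable u) (a : ℝ) :
    Tendsto (fun c => μ.real {x | u x ≤ c}) (𝓝[>] a) (𝓝 (μ.real {x | u x ≤ a})) := by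
  have hInter : (⋂ c > a, {x | u x ≤ c}) = {x | u x ≤ a} := by
    ext x
    simpa using ⟨le_of_forall_gt_imp_ge_of_dense, fun h c hc => h.trans hc.le⟩
  have := tendsto_measure_biInter_gt (μ := μ) (a := a)
    (fun c _ => (measurableSet_le hu measurable_const).nullMeasurableSet)
    (fun i j _ hij x hx => le_trans hx hij) ⟨a + 1, by linarith, measure_ne_top _ _⟩
  rw [hInter] at this
  exact (ENNReal.tendsto_toReal (measure_ne_top _ _)).comp this

lemma forall_integral_sign_sub_nonpos_iff (hu : Measurable u) :
    (∀ c > 0, ∫ x, Real.sign (u x - c) ∂μ ≤ 0) ↔ μ.real {x | 0 < u x} ≤ μ.real {x | u x ≤ 0} := by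
  simp only [integral_sign_sub hu, sub_nonpos]
  constructor
  · intro h
    have hcompl : ∀ c, μ.real {x | c < u x} = μ.real univ - μ.real {x | u x ≤ c} := fun c => by
      have := measureReal_add_measureReal_compl (μ := μ)
        (measurableSet_le hu measurable_const : MeasurableSet {x | u x ≤ c})
      simp only [compl_ofPred, not_le] at this
      linarith
    -- `μ{u > c} ≤ μ{u < c} ≤ μ{u ≤ c}`, and right continuity of `c ↦ μ{u ≤ c}` finishes
    have hbound : ∀ c > 0, μ.real univ ≤ 2 * μ.real {x | u x ≤ c} := fun c hc => by
      have : μ.real {x | u x < c} ≤ μ.real {x | u x ≤ c} :=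
        measureReal_mono fun x (hx : u x < c) => hx.le
      linarith [h c hc, hcompl c]
    have := ge_of_tendsto (tendsto_measureReal_setOf_le_nhdsGT hu 0 |>.const_mul 2)
      (eventually_nhdsWithin_of_forall hbound)
    linarith [hcompl 0]
  · intro h c hc
    calc μ.real {x | c < u x} ≤ μ.real {x | 0 < u x} := measureReal_mono fun x hx => hc.trans hx
      _ ≤ μ.real {x | u x ≤ 0} := h
      _ ≤ μ.real {x | u x < c} := measureReal_mono fun x hx => lt_of_le_of_lt hx hc

lemma abs_measureReal_pos_sub_neg_le_iff (hu : Measurable u) :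
    |μ.real {x | 0 < u x} - μ.real {x | u x < 0}| ≤ μ.real {x | u x = 0}
      ↔ ∀ c > 0, ∫ x, Real.sign (u x - c) ∂μ ≤ 0 ∧ 0 ≤ ∫ x, Real.sign (u x + c) ∂μ := by
  have hneg := forall_integral_sign_sub_nonpos_iff (μ := μ) hu.neg
  have hzero := measureReal_setOf_le_zero (μ := μ) hu.neg
  simp only [Pi.neg_apply, neg_pos, neg_nonpos, neg_lt_zero, neg_eq_zero, ← neg_add',
    Real.sign_neg, integral_neg, neg_nonpos] at hneg hzero
  rw [abs_sub_le_iff, forall₂_and, forall_integral_sign_sub_nonpos_iff hu, hneg,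
    measureReal_setOf_le_zero hu, hzero]
  constructor <;> rintro ⟨h₁, h₂⟩ <;> constructor <;> linarith

end MeasureTheory

/-- For a bounded open `Ω` and measurable `u`, the condition
`|λ({u>0}) - λ({u<0})| ≤ λ({u=0})` holds iff
`∫_Ω sgn(u-c) dx ≤ 0 ≤ ∫_Ω sgn(u+c) dx` for every `c > 0`. -/
theorem statement17 {N : ℕ} (Ω : Set (EuclideanSpace ℝ (Fin N)))
    (hΩo : IsOpen Ω) (hΩb : Bornology.IsBounded Ω)
    (u : EuclideanSpace ℝ (Fin N) → ℝ) (hu : Measurable u) :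
    |(volume {x ∈ Ω | 0 < u x}).toReal - (volume {x ∈ Ω | u x < 0}).toReal|
        ≤ (volume {x ∈ Ω | u x = 0}).toReal
    ↔ ∀ c : ℝ, 0 < c →
        (∫ x in Ω, Real.sign (u x - c)) ≤ 0 ∧ 0 ≤ ∫ x in Ω, Real.sign (u x + c) := by
  have : IsFiniteMeasure (volume.restrict Ω) := isFiniteMeasure_restrict.mpr hΩb.measure_lt_top.ne
  have hrestrict : ∀ p : EuclideanSpace ℝ (Fin N) → Prop,
      (volume {x ∈ Ω | p x}).toReal = (volume.restrict Ω).real {x | p x} := fun p => by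
    rw [measureReal_def, Measure.restrict_apply' hΩo.measurableSet, inter_comm]
    rfl
  simp only [hrestrict]
  exact abs_measureReal_pos_sub_neg_le_iff hu
end

section
/- Let Ω ⊂ ℝ^N be a bounded open set, let u : Ω → ℝ be measurable, and let γ : [0,1] → L^∞(Ω) be a continuous curve (with respect to the essential supremum norm) such that ∫_Ω sgn(u+γ(0)) dx > 0 and ∫_Ω sgn(u+γ(1)) dx < 0. Then there exists s₀ ∈ [0,1] such that |λ({u+γ(s₀) > 0}) − λ({u+γ(s₀) < 0})| ≤ λ({u+γ(s₀) = 0}). -/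
/-!
Let `f s = u + γ s` and let `s₀` be a boundary point, inside `[0, 1]`, of the set of parameters
with `∫ sgn (f s) > 0`. Points on both sides of that boundary lie arbitrarily close to `s₀`, so
`f s₀` is a uniform limit both of functions with `λ{f > 0} ≤ λ{f < 0}` and of functions with
`λ{f < 0} ≤ λ{f > 0}`. A uniform `ε`-perturbation moves the level sets by at most `ε`, and
letting `ε → 0` gives `λ{f s₀ > 0} ≤ λ{f s₀ ≤ 0}` and `λ{f s₀ < 0} ≤ λ{f s₀ ≥ 0}`, which is
exactly the balance inequality.
-/

open MeasureTheory Set Filter Topology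

theorem exists_mem_closure_inter_closure_diff {S : Set ℝ} {a b : ℝ} (hab : a ≤ b) (ha : a ∈ S)
    (hb : b ∉ S) : ∃ s ∈ Icc a b, s ∈ closure (S ∩ Icc a b) ∧ s ∈ closure (Icc a b \ S) := by
  set T := S ∩ Icc a b
  have hT : T.Nonempty := ⟨a, ha, left_mem_Icc.2 hab⟩
  have hTb : BddAbove T := ⟨b, fun t ht => ht.2.2⟩
  have hs : sSup T ∈ Icc a b :=
    ⟨le_csSup hTb ⟨ha, left_mem_Icc.2 hab⟩, csSup_le hT fun t ht => ht.2.2⟩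
  refine ⟨sSup T, hs, csSup_mem_closure hT hTb, ?_⟩
  by_cases hsS : sSup T ∈ S
  · have hlt : sSup T < b := hs.2.lt_of_ne fun h => hb (h ▸ hsS)
    have hsub : Ioc (sSup T) b ⊆ Icc a b \ S := fun t ht =>
      ⟨⟨hs.1.trans ht.1.le, ht.2⟩,
        fun htS => (le_csSup hTb ⟨htS, hs.1.trans ht.1.le, ht.2⟩).not_gt ht.1⟩
    exact closure_mono hsub (by rw [closure_Ioc hlt.ne]; exact left_mem_Icc.2 hlt.le)
  · exact subset_closure ⟨hs, hsS⟩

section SignBalance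

variable {α : Type*} [MeasurableSpace α] {μ : Measure α} {v : α → ℝ}

theorem ae_abs_lt_of_eLpNorm_top_lt {f : α → ℝ} {ε : ℝ} (hε : 0 < ε)
    (h : eLpNorm f ⊤ μ < ENNReal.ofReal ε) : ∀ᵐ x ∂μ, |f x| < ε := by
  rw [eLpNorm_exponent_top] at h
  filter_upwards [ae_le_eLpNormEssSup (f := f)] with x hx
  have := hx.trans_lt h
  rwa [Real.enorm_eq_ofReal_abs, ENNReal.ofReal_lt_ofReal_iff hε] at this

theorem integral_sign_eq [IsFiniteMeasure μ] (hv : Measurable v) :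
    ∫ x, Real.sign (v x) ∂μ = μ.real {x | 0 < v x} - μ.real {x | v x < 0} := by
  have hP : MeasurableSet {x | 0 < v x} := measurableSet_lt measurable_const hv
  have hN : MeasurableSet {x | v x < 0} := measurableSet_lt hv measurable_const
  have hsign : (fun x => Real.sign (v x))
      = fun x => {x | 0 < v x}.indicator 1 x - {x | v x < 0}.indicator 1 x := by
    ext x
    rcases lt_trichotomy (v x) 0 with h | h | h
    · simp [Real.sign_of_neg h, indicator, h, h.le.not_gt]
    · simp [h]
    · simp [Real.sign_of_pos h, indicator, h, h.le.not_gt]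
  rw [hsign, integral_sub ((integrable_const 1).indicator hP) ((integrable_const 1).indicator hN),
    integral_indicator_one hP, integral_indicator_one hN]

theorem measure_pos_le_measure_neg_of_integral_sign_nonpos [IsFiniteMeasure μ]
    (hv : Measurable v) (h : ∫ x, Real.sign (v x) ∂μ ≤ 0) :
    μ {x | 0 < v x} ≤ μ {x | v x < 0} := by
  rw [integral_sign_eq hv, sub_nonpos] at h
  exact (ENNReal.toReal_le_toReal (measure_ne_top _ _) (measure_ne_top _ _)).1 h

theorem measure_neg_le_measure_pos_of_integral_sign_nonneg [IsFiniteMeasure μ]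
    (hv : Measurable v) (h : 0 ≤ ∫ x, Real.sign (v x) ∂μ) :
    μ {x | v x < 0} ≤ μ {x | 0 < v x} := by
  rw [integral_sign_eq hv, sub_nonneg] at h
  exact (ENNReal.toReal_le_toReal (measure_ne_top _ _) (measure_ne_top _ _)).1 h

theorem measure_pos_le_measure_nonpos_of_forall_lt [IsFiniteMeasure μ] (hv : Measurable v)
    (h : ∀ ε > 0, μ {x | ε < v x} ≤ μ {x | v x < ε}) :
    μ {x | 0 < v x} ≤ μ {x | v x ≤ 0} := by
  have hlim : Tendsto (fun δ => μ {x | v x < δ}) (𝓝[>] 0) (𝓝 (μ {x | v x ≤ 0})) := by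
    have hInter : ⋂ δ > (0 : ℝ), {x | v x < δ} = {x | v x ≤ 0} := by
      ext x
      simpa only [mem_iInter, mem_ofPred_eq] using forall_gt_iff_le
    rw [← hInter]
    exact tendsto_measure_biInter_gt
      (fun δ _ => (measurableSet_lt hv measurable_const).nullMeasurableSet)
      (fun _ _ _ hδ x hx => lt_of_lt_of_le hx hδ) ⟨1, one_pos, measure_ne_top _ _⟩
  have hε : ∀ ε > 0, μ {x | ε < v x} ≤ μ {x | v x ≤ 0} := fun ε hε =>
    ge_of_tendsto hlim <| by
      filter_upwards [Ioo_mem_nhdsGT hε] with δ hδ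
      exact (measure_mono fun x (hx : ε < v x) => hδ.2.trans hx).trans (h δ hδ.1)
  have hUnion : {x | 0 < v x} = ⋃ n : ℕ, {x | 1 / ((n : ℝ) + 1) < v x} := by
    ext x
    simp only [mem_ofPred_eq, mem_iUnion]
    exact ⟨exists_nat_one_div_lt, fun ⟨n, hn⟩ => lt_trans (by positivity) hn⟩
  rw [hUnion, Monotone.measure_iUnion (s := fun n : ℕ => {x | 1 / ((n : ℝ) + 1) < v x})
    fun _ _ hmn => ofPred_subset_ofPred.2 fun _ => (Nat.one_div_le_one_div hmn).trans_lt]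
  exact iSup_le fun n => hε _ Nat.one_div_pos_of_nat

theorem measure_pos_le_measure_nonpos_of_approx [IsFiniteMeasure μ] (hv : Measurable v)
    (h : ∀ ε > 0, ∃ w : α → ℝ, (∀ᵐ x ∂μ, |w x - v x| < ε) ∧ μ {x | 0 < w x} ≤ μ {x | w x < 0}) :
    μ {x | 0 < v x} ≤ μ {x | v x ≤ 0} := by
  refine measure_pos_le_measure_nonpos_of_forall_lt hv fun ε hε => ?_
  obtain ⟨w, hwv, hw⟩ := h ε hε
  calc μ {x | ε < v x}
      ≤ μ {x | 0 < w x} := measure_mono_ae <| hwv.mono fun x hx (hx' : ε < v x) =>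
        show 0 < w x by linarith [abs_lt.1 hx]
    _ ≤ μ {x | w x < 0} := hw
    _ ≤ μ {x | v x < ε} := measure_mono_ae <| hwv.mono fun x hx (hx' : w x < 0) =>
        show v x < ε by linarith [abs_lt.1 hx]

theorem measure_neg_le_measure_nonneg_of_approx [IsFiniteMeasure μ] (hv : Measurable v)
    (h : ∀ ε > 0, ∃ w : α → ℝ, (∀ᵐ x ∂μ, |w x - v x| < ε) ∧ μ {x | w x < 0} ≤ μ {x | 0 < w x}) :
    μ {x | v x < 0} ≤ μ {x | 0 ≤ v x} := by
  have := measure_pos_le_measure_nonpos_of_approx (v := -v) hv.neg fun ε hε => by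
    obtain ⟨w, hwv, hw⟩ := h ε hε
    refine ⟨-w, hwv.mono fun x hx => ?_, ?_⟩
    · rwa [Pi.neg_apply, Pi.neg_apply, ← neg_sub', abs_neg]
    · simpa only [Pi.neg_apply, neg_pos, neg_lt_zero] using hw
  simpa only [Pi.neg_apply, neg_pos, neg_nonpos] using this

theorem abs_measureReal_pos_sub_measureReal_neg_le [IsFiniteMeasure μ] (hv : Measurable v)
    (hpos : μ {x | 0 < v x} ≤ μ {x | v x ≤ 0}) (hneg : μ {x | v x < 0} ≤ μ {x | 0 ≤ v x}) :
    |μ.real {x | 0 < v x} - μ.real {x | v x < 0}| ≤ μ.real {x | v x = 0} := by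
  have hZ : MeasurableSet {x | v x = 0} := hv (measurableSet_singleton 0)
  have hle : μ.real {x | v x ≤ 0} = μ.real {x | v x < 0} + μ.real {x | v x = 0} := by
    rw [← measureReal_union (μ := μ) (s₁ := {x | v x < 0}) (s₂ := {x | v x = 0})
      (disjoint_left.2 fun x h₁ h₂ => ne_of_lt h₁ h₂) hZ]
    congr 1; ext x; simp [le_iff_lt_or_eq]
  have hge : μ.real {x | 0 ≤ v x} = μ.real {x | 0 < v x} + μ.real {x | v x = 0} := by
    rw [← measureReal_union (μ := μ) (s₁ := {x | 0 < v x}) (s₂ := {x | v x = 0})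
      (disjoint_left.2 fun x h₁ h₂ => ne_of_gt h₁ h₂) hZ]
    congr 1; ext x; simp [le_iff_lt_or_eq, eq_comm]
  have hpos' := ENNReal.toReal_mono (measure_ne_top _ _) hpos
  have hneg' := ENNReal.toReal_mono (measure_ne_top _ _) hneg
  simp only [← measureReal_def] at hpos' hneg'
  rw [abs_sub_le_iff]
  constructor <;> linarith

end SignBalance

theorem statement18_general {N : ℕ} (Ω : Set (EuclideanSpace ℝ (Fin N)))
    (hΩo : IsOpen Ω) (hΩb : Bornology.IsBounded Ω)
    (u : EuclideanSpace ℝ (Fin N) → ℝ) (hu : Measurable u)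
    (γ : ℝ → EuclideanSpace ℝ (Fin N) → ℝ)
    (hγm : ∀ s ∈ Icc (0 : ℝ) 1, Measurable (γ s))
    (hγc : ∀ s ∈ Icc (0 : ℝ) 1, ∀ ε : ℝ, 0 < ε → ∃ δ : ℝ, 0 < δ ∧
      ∀ t ∈ Icc (0 : ℝ) 1, |t - s| < δ →
        eLpNorm (γ t - γ s) ⊤ (volume.restrict Ω) < ENNReal.ofReal ε)
    (h0 : 0 < ∫ x in Ω, Real.sign (u x + γ 0 x))
    (h1 : (∫ x in Ω, Real.sign (u x + γ 1 x)) < 0) :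
    ∃ s₀ ∈ Icc (0 : ℝ) 1,
      |(volume {x ∈ Ω | 0 < u x + γ s₀ x}).toReal
          - (volume {x ∈ Ω | u x + γ s₀ x < 0}).toReal|
        ≤ (volume {x ∈ Ω | u x + γ s₀ x = 0}).toReal := by
  have hΩ : MeasurableSet Ω := hΩo.measurableSet
  have : IsFiniteMeasure (volume.restrict Ω) := isFiniteMeasure_restrict.2 hΩb.measure_lt_top.ne
  have hf : ∀ s ∈ Icc (0 : ℝ) 1, Measurable fun x => u x + γ s x := fun s hs => hu.add (hγm s hs)
  obtain ⟨s₀, hs₀, hS, hSc⟩ := exists_mem_closure_inter_closure_diff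
    (S := {s | 0 < ∫ x in Ω, Real.sign (u x + γ s x)}) zero_le_one h0 h1.le.not_gt
  have hnear : ∀ ε > 0, ∀ T ⊆ Icc (0 : ℝ) 1, s₀ ∈ closure T → ∃ t ∈ T,
      ∀ᵐ x ∂volume.restrict Ω, |(u x + γ t x) - (u x + γ s₀ x)| < ε := by
    intro ε hε T hT hs
    obtain ⟨δ, hδ, hγδ⟩ := hγc s₀ hs₀ ε hε
    obtain ⟨t, htT, hdist⟩ := Metric.mem_closure_iff.1 hs δ hδ
    refine ⟨t, htT, (ae_abs_lt_of_eLpNorm_top_lt hε (hγδ t (hT htT) ?_)).mono fun x hx => ?_⟩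
    · rwa [abs_sub_comm, ← Real.dist_eq]
    · simpa using hx
  have hpos := measure_pos_le_measure_nonpos_of_approx (hf s₀ hs₀) fun ε hε => by
    obtain ⟨t, ⟨ht, hgt⟩, hx⟩ := hnear ε hε _ sdiff_subset hSc
    exact ⟨_, hx, measure_pos_le_measure_neg_of_integral_sign_nonpos (hf t ht) (not_lt.1 hgt)⟩
  have hneg := measure_neg_le_measure_nonneg_of_approx (hf s₀ hs₀) fun ε hε => by
    obtain ⟨t, ⟨hgt, ht⟩, hx⟩ := hnear ε hε _ inter_subset_right hS
    exact ⟨_, hx, measure_neg_le_measure_pos_of_integral_sign_nonneg (hf t ht) hgt.le⟩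
  refine ⟨s₀, hs₀, ?_⟩
  have hsep : ∀ p : EuclideanSpace ℝ (Fin N) → Prop,
      volume {x ∈ Ω | p x} = volume.restrict Ω {x | p x} := fun p => by
    rw [Measure.restrict_apply' hΩ, inter_comm]; rfl
  simpa only [hsep, measureReal_def] using
    abs_measureReal_pos_sub_measureReal_neg_le (hf s₀ hs₀) hpos hneg

/-- If `γ : [0,1] → L^∞(Ω)` is continuous (in the essential sup norm),
`∫_Ω sgn(u + γ(0)) dx > 0` and `∫_Ω sgn(u + γ(1)) dx < 0`, then there is `s₀ ∈ [0,1]` with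
`|λ({u+γ(s₀)>0}) - λ({u+γ(s₀)<0})| ≤ λ({u+γ(s₀)=0})`. -/
theorem statement18 {N : ℕ} (Ω : Set (EuclideanSpace ℝ (Fin N)))
    (hΩo : IsOpen Ω) (hΩb : Bornology.IsBounded Ω)
    (u : EuclideanSpace ℝ (Fin N) → ℝ) (hu : Measurable u)
    (γ : ℝ → EuclideanSpace ℝ (Fin N) → ℝ)
    (hγm : ∀ s ∈ Icc (0 : ℝ) 1, Measurable (γ s))
    (hγb : ∀ s ∈ Icc (0 : ℝ) 1, eLpNorm (γ s) ⊤ (volume.restrict Ω) < ⊤)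
    (hγc : ∀ s ∈ Icc (0 : ℝ) 1, ∀ ε : ℝ, 0 < ε → ∃ δ : ℝ, 0 < δ ∧
      ∀ t ∈ Icc (0 : ℝ) 1, |t - s| < δ →
        eLpNorm (γ t - γ s) ⊤ (volume.restrict Ω) < ENNReal.ofReal ε)
    (h0 : 0 < ∫ x in Ω, Real.sign (u x + γ 0 x))
    (h1 : (∫ x in Ω, Real.sign (u x + γ 1 x)) < 0) :
    ∃ s₀ ∈ Icc (0 : ℝ) 1,
      |(volume {x ∈ Ω | 0 < u x + γ s₀ x}).toReal
          - (volume {x ∈ Ω | u x + γ s₀ x < 0}).toReal|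
        ≤ (volume {x ∈ Ω | u x + γ s₀ x = 0}).toReal :=
  statement18_general Ω hΩo hΩb u hu γ hγm hγc h0 h1
end

section
/- Let Ω ⊂ ℝ^N be a bounded open set and let u : Ω → ℝ be measurable. Then there exists c ∈ ℝ such that |λ({x ∈ Ω : u(x)+c > 0}) − λ({x ∈ Ω : u(x)+c < 0})| ≤ λ({x ∈ Ω : u(x)+c = 0}). -/
open MeasureTheory Set Filter

/-- Every measurable function on a bounded open set `Ω` can be shifted by a
constant into the class `M`, i.e. there is `c ∈ ℝ` with
`|λ({u+c>0}) - λ({u+c<0})| ≤ λ({u+c=0})`. -/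
theorem statement19 {N : ℕ} (Ω : Set (EuclideanSpace ℝ (Fin N)))
    (hΩo : IsOpen Ω) (hΩb : Bornology.IsBounded Ω)
    (u : EuclideanSpace ℝ (Fin N) → ℝ) (hu : Measurable u) :
    ∃ c : ℝ,
      |(volume {x ∈ Ω | 0 < u x + c}).toReal - (volume {x ∈ Ω | u x + c < 0}).toReal|
        ≤ (volume {x ∈ Ω | u x + c = 0}).toReal := by
  classical
  have hΩm : MeasurableSet Ω := hΩo.measurableSet
  set m := volume Ω with hm_def
  have hmfin : m ≠ ⊤ := hΩb.measure_lt_top.ne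
  set A : ℝ → Set (EuclideanSpace ℝ (Fin N)) := fun t => Ω ∩ u ⁻¹' Set.Ioi t with hA_def
  set C : ℝ → Set (EuclideanSpace ℝ (Fin N)) := fun t => Ω ∩ u ⁻¹' Set.Iio t with hC_def
  have hAmeas : ∀ t, MeasurableSet (A t) := fun t => hΩm.inter (hu measurableSet_Ioi)
  have hCmeas : ∀ t, MeasurableSet (C t) := fun t => hΩm.inter (hu measurableSet_Iio)
  have hAanti : Antitone A := fun s t hst =>
    Set.inter_subset_inter_right _ (Set.preimage_mono (Set.Ioi_subset_Ioi hst))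
  have hAfin : ∀ t, volume (A t) ≠ ⊤ := fun t =>
    ((measure_mono Set.inter_subset_left).trans_lt hmfin.lt_top).ne
  by_cases hm0 : m = 0
  · refine ⟨0, ?_⟩
    simp only [add_zero]
    have h1 : volume {x ∈ Ω | 0 < u x} = 0 :=
      measure_mono_null (fun x hx => hx.1) hm0
    have h2 : volume {x ∈ Ω | u x < 0} = 0 :=
      measure_mono_null (fun x hx => hx.1) hm0
    rw [h1, h2]
    simp
  -- The set of "good" levels
  set S : Set ℝ := {t | volume (A t) ≤ m / 2} with hS_def
  have hSup : ∀ s t : ℝ, s ∈ S → s ≤ t → t ∈ S := fun s t hs hst =>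
    le_trans (measure_mono (hAanti hst)) hs
  have hSne : S.Nonempty := by
    have hInter : ⋂ n : ℕ, A (n : ℝ) = ∅ := by
      ext x
      simp only [Set.mem_iInter, Set.mem_empty_iff_false, iff_false]
      intro h
      obtain ⟨n, hn⟩ := exists_nat_gt (u x)
      exact absurd ((h n).2) (by simpa using hn.le.not_gt)
    have htend : Tendsto (fun n : ℕ => volume (A (n : ℝ))) atTop (nhds 0) := by
      have := tendsto_measure_iInter_atTop (μ := volume)
        (s := fun n : ℕ => A (n : ℝ))
        (fun n => (hAmeas _).nullMeasurableSet)
        (fun a b hab => hAanti (by exact_mod_cast hab)) ⟨0, hAfin ((0:ℕ):ℝ)⟩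
      rwa [hInter, measure_empty] at this
    have hhalf : (0 : ENNReal) < m / 2 := ENNReal.half_pos hm0
    obtain ⟨n, hn⟩ := (htend.eventually_le_const hhalf).exists
    exact ⟨(n : ℝ), hn⟩
  have hSbdd : BddBelow S := by
    -- the sets A (-(n)) increase up to Ω
    have hUnion : ⋃ n : ℕ, A (-(n : ℝ)) = Ω := by
      ext x
      simp only [Set.mem_iUnion, hA_def, Set.mem_inter_iff, Set.mem_preimage, Set.mem_Ioi]
      constructor
      · rintro ⟨n, hx, _⟩; exact hx
      · intro hx
        obtain ⟨n, hn⟩ := exists_nat_gt (-(u x))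
        exact ⟨n, hx, by linarith⟩
    have htend : Tendsto (fun n : ℕ => volume (A (-(n : ℝ)))) atTop (nhds m) := by
      have := tendsto_measure_iUnion_atTop (μ := volume)
        (s := fun n : ℕ => A (-(n : ℝ)))
        (fun a b hab => hAanti (by simp; exact_mod_cast hab))
      rwa [hUnion] at this
    have hlt : m / 2 < m := ENNReal.half_lt_self hm0 hmfin
    obtain ⟨n, hn⟩ := (htend.eventually_const_lt hlt).exists
    refine ⟨-(n : ℝ), fun s hs => ?_⟩
    by_contra hcon
    push_neg at hcon
    exact absurd (hSup s _ hs hcon.le) (not_le.2 hn)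
  set t₀ : ℝ := sInf S with ht₀_def
  -- t₀ + ε ∈ S for every ε > 0
  have hmemS : ∀ ε : ℝ, 0 < ε → t₀ + ε ∈ S := by
    intro ε hε
    obtain ⟨s, hs, hlt⟩ := Real.lt_sInf_add_pos hSne hε
    exact hSup s _ hs hlt.le
  -- below t₀, measure is > m/2
  have hnotS : ∀ t : ℝ, t < t₀ → m / 2 < volume (A t) := by
    intro t ht
    by_contra hcon
    push_neg at hcon
    exact absurd (csInf_le hSbdd hcon) (not_le.2 ht)
  -- Claim 1 : volume (A t₀) ≤ m/2
  have hclaim1 : volume (A t₀) ≤ m / 2 := by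
    have hU : A t₀ = ⋃ n : ℕ, A (t₀ + 1 / (n + 1)) := by
      ext x
      simp only [hA_def, Set.mem_inter_iff, Set.mem_preimage, Set.mem_Ioi, Set.mem_iUnion]
      constructor
      · rintro ⟨hx, hlt⟩
        obtain ⟨n, hn⟩ := exists_nat_one_div_lt (sub_pos.2 hlt)
        exact ⟨n, hx, by linarith⟩
      · rintro ⟨n, hx, hlt⟩
        have : (0:ℝ) < 1 / (n + 1) := by positivity
        exact ⟨hx, by linarith⟩
    have hmono1 : Monotone (fun n : ℕ => A (t₀ + 1 / ((n:ℝ) + 1))) := by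
      intro a b hab
      apply hAanti
      have h' : (a:ℝ) ≤ b := Nat.cast_le.2 hab
      have : (1:ℝ) / ((b:ℝ) + 1) ≤ 1 / ((a:ℝ) + 1) :=
        one_div_le_one_div_of_le (by positivity) (by linarith)
      linarith
    rw [hU, hmono1.directed_le.measure_iUnion]
    exact iSup_le fun n => hmemS _ (by positivity)
  -- Claim 2 : volume (C t₀) ≤ m/2
  have hCA : ∀ t : ℝ, volume (C t) ≤ m / 2 → True := fun _ _ => trivial
  have hCle : ∀ t : ℝ, t < t₀ → volume (C t) ≤ m / 2 := by
    intro t ht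
    by_contra hcon
    push_neg at hcon
    have hdisj : Disjoint (C t) (A t) := by
      rw [Set.disjoint_left]
      rintro x ⟨_, hx1⟩ ⟨_, hx2⟩
      exact absurd hx2 (by simp only [Set.mem_preimage, Set.mem_Ioi] at hx1 ⊢; linarith [Set.mem_Iio.mp hx1])
    have hsum : volume (C t) + volume (A t) ≤ m := by
      rw [← measure_union hdisj (hAmeas t)]
      exact measure_mono (Set.union_subset Set.inter_subset_left Set.inter_subset_left)
    have : m < volume (C t) + volume (A t) := by
      calc m = m / 2 + m / 2 := (ENNReal.add_halves m).symm
        _ < volume (C t) + volume (A t) := ENNReal.add_lt_add hcon (hnotS t ht)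
    exact absurd hsum (not_le.2 this)
  have hclaim2 : volume (C t₀) ≤ m / 2 := by
    have hU : C t₀ = ⋃ n : ℕ, C (t₀ - 1 / (n + 1)) := by
      ext x
      simp only [hC_def, Set.mem_inter_iff, Set.mem_preimage, Set.mem_Iio, Set.mem_iUnion]
      constructor
      · rintro ⟨hx, hlt⟩
        obtain ⟨n, hn⟩ := exists_nat_one_div_lt (sub_pos.2 hlt)
        exact ⟨n, hx, by linarith⟩
      · rintro ⟨n, hx, hlt⟩
        have : (0:ℝ) < 1 / (n + 1) := by positivity
        exact ⟨hx, by linarith⟩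
    have hCmono : ∀ a b : ℝ, a ≤ b → C a ⊆ C b := fun a b hab =>
      Set.inter_subset_inter_right _ (Set.preimage_mono (Set.Iio_subset_Iio hab))
    have hmono2 : Monotone (fun n : ℕ => C (t₀ - 1 / ((n:ℝ) + 1))) := by
      intro a b hab
      apply hCmono
      have h' : (a:ℝ) ≤ b := Nat.cast_le.2 hab
      have : (1:ℝ) / ((b:ℝ) + 1) ≤ 1 / ((a:ℝ) + 1) :=
        one_div_le_one_div_of_le (by positivity) (by linarith)
      linarith
    rw [hU, hmono2.directed_le.measure_iUnion]
    refine iSup_le fun n => hCle _ (by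
      have : (0:ℝ) < 1 / ((n:ℝ) + 1) := by positivity
      linarith)
  -- conclude with c = -t₀
  refine ⟨-t₀, ?_⟩
  have hPset : {x ∈ Ω | 0 < u x + -t₀} = A t₀ := by
    ext x; simp only [hA_def, Set.mem_setOf_eq, Set.mem_inter_iff, Set.mem_preimage, Set.mem_Ioi]
    constructor
    · rintro ⟨hx, h⟩; exact ⟨hx, by linarith⟩
    · rintro ⟨hx, h⟩; exact ⟨hx, by linarith⟩
  have hNset : {x ∈ Ω | u x + -t₀ < 0} = C t₀ := by
    ext x; simp only [hC_def, Set.mem_setOf_eq, Set.mem_inter_iff, Set.mem_preimage, Set.mem_Iio]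
    constructor
    · rintro ⟨hx, h⟩; exact ⟨hx, by linarith⟩
    · rintro ⟨hx, h⟩; exact ⟨hx, by linarith⟩
  set Z : Set (EuclideanSpace ℝ (Fin N)) := {x ∈ Ω | u x + -t₀ = 0} with hZ_def
  have hZmeas : MeasurableSet Z := by
    have : Z = Ω ∩ u ⁻¹' {t₀} := by
      ext x; simp only [hZ_def, Set.mem_setOf_eq, Set.mem_inter_iff, Set.mem_preimage,
        Set.mem_singleton_iff]
      constructor
      · rintro ⟨hx, h⟩; exact ⟨hx, by linarith⟩
      · rintro ⟨hx, h⟩; exact ⟨hx, by linarith⟩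
    rw [this]; exact hΩm.inter (hu (measurableSet_singleton _))
  rw [hPset, hNset]
  -- partition of Ω
  have hpart : volume (A t₀) + volume (C t₀) + volume Z = m := by
    have hdisj1 : Disjoint (A t₀) (C t₀) := by
      rw [Set.disjoint_left]
      rintro x ⟨_, hx1⟩ ⟨_, hx2⟩
      simp only [Set.mem_preimage, Set.mem_Ioi] at hx1
      simp only [Set.mem_preimage, Set.mem_Iio] at hx2
      linarith
    have hdisj2 : Disjoint (A t₀ ∪ C t₀) Z := by
      rw [Set.disjoint_left]
      rintro x (⟨_, hx1⟩ | ⟨_, hx1⟩) ⟨_, hx2⟩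
      · simp only [Set.mem_preimage, Set.mem_Ioi] at hx1; linarith
      · simp only [Set.mem_preimage, Set.mem_Iio] at hx1; linarith
    have hcover : A t₀ ∪ C t₀ ∪ Z = Ω := by
      ext x
      simp only [hA_def, hC_def, hZ_def, Set.mem_union, Set.mem_inter_iff, Set.mem_preimage,
        Set.mem_Ioi, Set.mem_Iio, Set.mem_setOf_eq]
      constructor
      · rintro ((⟨hx, _⟩ | ⟨hx, _⟩) | ⟨hx, _⟩) <;> exact hx
      · intro hx
        rcases lt_trichotomy (u x) t₀ with h | h | h
        · exact Or.inl (Or.inr ⟨hx, h⟩)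
        · exact Or.inr ⟨hx, by linarith⟩
        · exact Or.inl (Or.inl ⟨hx, h⟩)
    calc volume (A t₀) + volume (C t₀) + volume Z
        = volume (A t₀ ∪ C t₀) + volume Z := by rw [measure_union hdisj1 (hCmeas t₀)]
      _ = volume (A t₀ ∪ C t₀ ∪ Z) := (measure_union hdisj2 hZmeas).symm
      _ = m := by rw [hcover]
  -- pass to real numbers
  have hAfin' : volume (A t₀) ≠ ⊤ := hAfin t₀
  have hCfin : volume (C t₀) ≠ ⊤ :=
    ((measure_mono Set.inter_subset_left).trans_lt hmfin.lt_top).ne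
  have hZfin : volume Z ≠ ⊤ :=
    ((measure_mono (fun x hx => hx.1)).trans_lt hmfin.lt_top).ne
  set a := (volume (A t₀)).toReal
  set b := (volume (C t₀)).toReal
  set e := (volume Z).toReal
  have hM : a + b + e = m.toReal := by
    rw [← hpart, ENNReal.toReal_add (by finiteness) hZfin, ENNReal.toReal_add hAfin' hCfin]
  have hhalf : (m / 2).toReal = m.toReal / 2 := by
    rw [ENNReal.toReal_div]; norm_num
  have hhfin : m / 2 ≠ ⊤ := (ENNReal.div_lt_top hmfin (by norm_num)).ne
  have ha : a ≤ m.toReal / 2 := by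
    rw [← hhalf]
    exact ENNReal.toReal_mono hhfin hclaim1
  have hb : b ≤ m.toReal / 2 := by
    rw [← hhalf]
    exact ENNReal.toReal_mono hhfin hclaim2
  have he : 0 ≤ e := ENNReal.toReal_nonneg
  rw [abs_le]
  constructor <;> linarith
end
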